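/- arXiv:1708.08215 — 9 statements merged into one kernel-verified Lean document; each statement's English description precedes it below -/
import Mathlib

section
/- For Gessel's model with kernel K(x,y) = t(y + x²y + x²y² + 1) - xy, the rational function J(y) = y/(t(1+y)²) + t(1+y)²/y satisfies J(Y₀) = J(Y₁) whenever Y₀ and Y₁ are the two roots in y of K(x,y) = 0 (equivalently, the numerator of J(y) - J(y') vanishes whenever K(x,y) = K(x,y') = 0 and y, y' are the two roots). -/
/-- For Gessel's model with kernel `K(x,y) = t(y + x²y + x²y² + 1) - xy`, the rational
function `J(y) = y/(t(1+y)²) + t(1+y)²/y` is a `y`-invariant: it takes the same value at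
the two roots `Y₀, Y₁` (in `y`) of `K(x,y) = 0`. -/
theorem gessel_J_is_invariant {F : Type*} [Field F] (t x y0 y1 : F)
    (ht : t ≠ 0) (hx : x ≠ 0) (hy0 : y0 ≠ 0) (hy1 : y1 ≠ 0)
    (h1y0 : 1 + y0 ≠ 0) (h1y1 : 1 + y1 ≠ 0)
    (hK0 : t * (y0 + x ^ 2 * y0 + x ^ 2 * y0 ^ 2 + 1) - x * y0 = 0)
    (hK1 : t * (y1 + x ^ 2 * y1 + x ^ 2 * y1 ^ 2 + 1) - x * y1 = 0)
    (hne : y0 ≠ y1) :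
    y0 / (t * (1 + y0) ^ 2) + t * (1 + y0) ^ 2 / y0
      = y1 / (t * (1 + y1) ^ 2) + t * (1 + y1) ^ 2 / y1 := by
  have hd : y0 - y1 ≠ 0 := sub_ne_zero.mpr hne
  -- Vieta: product of roots, x² y0 y1 = 1
  have hprod : x ^ 2 * (y0 * y1) = 1 := by
    have h : t * (y0 - y1) * (x ^ 2 * (y0 * y1) - 1) = 0 := by
      linear_combination y1 * hK0 - y0 * hK1
    rcases mul_eq_zero.mp h with h' | h'
    · rcases mul_eq_zero.mp h' with h'' | h''
      · exact absurd h'' ht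
      · exact absurd h'' hd
    · linear_combination h'
  -- Vieta: sum of roots
  have hsum' : t + t * x ^ 2 + t * x ^ 2 * (y0 + y1) - x = 0 := by
    have hsum : (y0 - y1) * (t + t * x ^ 2 + t * x ^ 2 * (y0 + y1) - x) = 0 := by
      linear_combination hK0 - hK1
    rcases mul_eq_zero.mp hsum with h' | h'
    · exact absurd h' hd
    · exact h'
  -- key: t·x·(1+y0)(1+y1) = 1
  have hA : t * x * ((1 + y0) * (1 + y1)) = 1 := by
    have h2 : x * (t * x * ((1 + y0) * (1 + y1)) - 1) = 0 := by
      linear_combination hsum' + t * hprod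
    rcases mul_eq_zero.mp h2 with h' | h'
    · exact absurd h' hx
    · linear_combination h'
  -- hence t²(1+y0)²(1+y1)² = y0 y1
  have hw' : t ^ 2 * ((1 + y0) * (1 + y1)) ^ 2 = y0 * y1 := by
    have h3 : x ^ 2 * (t ^ 2 * ((1 + y0) * (1 + y1)) ^ 2 - y0 * y1) = 0 := by
      linear_combination (t * x * ((1 + y0) * (1 + y1)) + 1) * hA - hprod
    rcases mul_eq_zero.mp h3 with h' | h'
    · exact absurd h' (pow_ne_zero _ hx)
    · linear_combination h'
  -- the two "cross" identities
  have e0 : y0 / (t * (1 + y0) ^ 2) = t * (1 + y1) ^ 2 / y1 := by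
    rw [div_eq_div_iff (mul_ne_zero ht (pow_ne_zero _ h1y0)) hy1]
    linear_combination -hw'
  have e1 : y1 / (t * (1 + y1) ^ 2) = t * (1 + y0) ^ 2 / y0 := by
    rw [div_eq_div_iff (mul_ne_zero ht (pow_ne_zero _ h1y1)) hy0]
    linear_combination -hw'
  rw [e0, e1]
  ring
end

section
/- For Gessel's model with kernel K(x,y) = t(y + x²y + x²y² + 1) - xy, if Y₀ and Y₁ are the two roots in y of K(x,y) = 0, then xY₀ - xY₁ = G(Y₀) - G(Y₁), where G(y) = -1/(t(1+y)). Equivalently, setting F(x) = 1/t - 1/x, the polynomial K(x,y) divides the numerator of F(x) + G(y) - xy. -/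
/-- For Gessel's model with kernel `K(x,y) = t(y + x²y + x²y² + 1) - xy`: if `Y₀, Y₁` are
the two roots in `y` of `K(x,y) = 0`, then `x·Y₀ - x·Y₁ = G(Y₀) - G(Y₁)` where
`G(y) = -1/(t(1+y))`.  Equivalently, with `F(x) = 1/t - 1/x`, the kernel `K(x,y)`
divides the numerator of `F(x) + G(y) - xy`: explicitly
`t·x·(1+y)·(F(x) + G(y) - xy) = -K(x,y)`. -/
theorem gessel_decoupling {F : Type*} [Field F] (t x y0 y1 : F)
    (ht : t ≠ 0) (hx : x ≠ 0)
    (h1y0 : 1 + y0 ≠ 0) (h1y1 : 1 + y1 ≠ 0)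
    (hK0 : t * (y0 + x ^ 2 * y0 + x ^ 2 * y0 ^ 2 + 1) - x * y0 = 0)
    (hK1 : t * (y1 + x ^ 2 * y1 + x ^ 2 * y1 ^ 2 + 1) - x * y1 = 0) :
    (x * y0 - x * y1 = (-(1 / (t * (1 + y0)))) - (-(1 / (t * (1 + y1))))) ∧
    (∀ y : F, 1 + y ≠ 0 →
      t * x * (1 + y) * ((1 / t - 1 / x) + (-(1 / (t * (1 + y)))) - x * y)
        = -(t * (y + x ^ 2 * y + x ^ 2 * y ^ 2 + 1) - x * y)) := by
  have key : ∀ y : F, 1 + y ≠ 0 →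
      t * x * (1 + y) * ((1 / t - 1 / x) + (-(1 / (t * (1 + y)))) - x * y)
        = -(t * (y + x ^ 2 * y + x ^ 2 * y ^ 2 + 1) - x * y) := by
    intro y hy
    field_simp
    ring
  refine ⟨?_, key⟩
  have h0 := key y0 h1y0
  rw [hK0, neg_zero] at h0
  have h1 := key y1 h1y1
  rw [hK1, neg_zero] at h1
  have e0 : (1 / t - 1 / x) + (-(1 / (t * (1 + y0)))) - x * y0 = 0 := by
    rcases mul_eq_zero.mp h0 with h | h
    · rcases mul_eq_zero.mp h with h | h
      · exact absurd (mul_eq_zero.mp h) (by simp [ht, hx])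
      · exact absurd h h1y0
    · exact h
  have e1 : (1 / t - 1 / x) + (-(1 / (t * (1 + y1)))) - x * y1 = 0 := by
    rcases mul_eq_zero.mp h1 with h | h
    · rcases mul_eq_zero.mp h with h | h
      · exact absurd (mul_eq_zero.mp h) (by simp [ht, hx])
      · exact absurd h h1y1
    · exact h
  linear_combination e1 - e0
end

section
/- Let A(y) = Σ_{0 ≤ j ≤ n/2 + n₀} a(j,n) yʲ tⁿ be a Laurent series in t with polynomial coefficients in y, where n₀ ≥ 0 is fixed. Let Y₀, Y₁ be Laurent series in t with coefficients in ℚ(u) of the form Y₀ = u/t + O(1) and Y₁ = (1/u)/t + O(1), related by u ↦ 1/u. Then A(Y₀) and A(Y₁) are well defined Laurent series in t with coefficients in ℚ(u), and if A(Y₀) = A(Y₁), then A(y) is independent of y. -/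
open scoped BigOperators

lemma aux_pow_coeff_zero (f : LaurentSeries (RatFunc ℚ))
    (h : ∀ m : ℤ, m < -1 → f.coeff m = 0) (j : ℕ) :
    ∀ m : ℤ, m < -(j : ℤ) → (f ^ j).coeff m = 0 := by
  induction j with
  | zero =>
    intro m hm
    simp only [pow_zero]
    rw [HahnSeries.coeff_one, if_neg]
    omega
  | succ j ih =>
    intro m hm
    rw [pow_succ, HahnSeries.coeff_mul]
    apply Finset.sum_eq_zero
    rintro ⟨i, k⟩ hik
    rw [Finset.mem_addAntidiagonal] at hik
    obtain ⟨h1, h2, h3⟩ := hik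
    by_cases hi : i < -(j : ℤ)
    · rw [ih i hi, zero_mul]
    · have : k < -1 := by push_cast at hm ⊢; omega
      rw [h k this, mul_zero]

lemma aux_pow_coeff_bot (f : LaurentSeries (RatFunc ℚ))
    (h : ∀ m : ℤ, m < -1 → f.coeff m = 0) (j : ℕ) :
    (f ^ j).coeff (-(j : ℤ)) = (f.coeff (-1)) ^ j := by
  induction j with
  | zero => simp
  | succ j ih =>
    rw [pow_succ, HahnSeries.coeff_mul]
    rw [Finset.sum_eq_single ((-(j:ℤ)), (-1 : ℤ))]
    · rw [ih, pow_succ]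
    · rintro ⟨i, k⟩ hik hne
      rw [Finset.mem_addAntidiagonal] at hik
      obtain ⟨h1, h2, h3⟩ := hik
      by_cases hi : i < -(j : ℤ)
      · rw [aux_pow_coeff_zero f h j i hi, zero_mul]
      · by_cases hk : k < -1
        · rw [h k hk, mul_zero]
        · exfalso; apply hne
          have : i = -(j:ℤ) ∧ k = -1 := by push_cast at h3; omega
          simp [this.1, this.2]
    · intro hmem
      rw [Finset.mem_addAntidiagonal] at hmem
      push_neg at hmem
      by_cases h1 : (f ^ j).coeff (-(j:ℤ)) = 0
      · rw [h1, zero_mul]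
      · by_cases h2 : f.coeff (-1) = 0
        · rw [h2, mul_zero]
        · exfalso
          exact absurd (by push_cast; ring) (hmem h1 h2)

lemma aux_indep (K : ℕ) (c : ℕ → ℚ)
    (h : ∑ j ∈ Finset.Icc 1 K, (c j : RatFunc ℚ) * RatFunc.X ^ j
       = ∑ j ∈ Finset.Icc 1 K, (c j : RatFunc ℚ) * (RatFunc.X)⁻¹ ^ j) :
    ∀ j ∈ Finset.Icc 1 K, c j = 0 := by
  have hX : (RatFunc.X : RatFunc ℚ) ≠ 0 := RatFunc.X_ne_zero
  have h2 : ∑ j ∈ Finset.Icc 1 K, (c j : RatFunc ℚ) * RatFunc.X ^ (K + j)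
       = ∑ j ∈ Finset.Icc 1 K, (c j : RatFunc ℚ) * RatFunc.X ^ (K - j) := by
    have h1 := congrArg (· * RatFunc.X ^ K) h
    simp only [Finset.sum_mul] at h1
    calc ∑ j ∈ Finset.Icc 1 K, (c j : RatFunc ℚ) * RatFunc.X ^ (K + j)
        = ∑ j ∈ Finset.Icc 1 K, (c j : RatFunc ℚ) * RatFunc.X ^ j * RatFunc.X ^ K := by
          refine Finset.sum_congr rfl fun j hj => ?_
          rw [mul_assoc, ← pow_add, Nat.add_comm]
      _ = ∑ j ∈ Finset.Icc 1 K, (c j : RatFunc ℚ) * (RatFunc.X)⁻¹ ^ j * RatFunc.X ^ K := h1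
      _ = ∑ j ∈ Finset.Icc 1 K, (c j : RatFunc ℚ) * RatFunc.X ^ (K - j) := by
          refine Finset.sum_congr rfl fun j hj => ?_
          rw [Finset.mem_Icc] at hj
          rw [mul_assoc]
          congr 1
          rw [inv_pow, inv_mul_eq_iff_eq_mul₀ (pow_ne_zero _ hX), ← pow_add,
            Nat.add_sub_cancel' hj.2]
  have hcast : ∀ q : ℚ, (algebraMap (Polynomial ℚ) (RatFunc ℚ)) (Polynomial.C q)
      = (q : RatFunc ℚ) := fun q => by
    have := eq_ratCast ((algebraMap (Polynomial ℚ) (RatFunc ℚ)).comp Polynomial.C) q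
    simpa using this
  have h3 : ∑ j ∈ Finset.Icc 1 K, Polynomial.C (c j) * Polynomial.X ^ (K + j)
      = ∑ j ∈ Finset.Icc 1 K, Polynomial.C (c j) * Polynomial.X ^ (K - j) := by
    apply RatFunc.algebraMap_injective ℚ
    push_cast [map_sum, map_mul, map_pow, hcast, RatFunc.algebraMap_X]
    exact h2
  intro j0 hj0
  rw [Finset.mem_Icc] at hj0
  have h4 := congrArg (fun p => Polynomial.coeff p (K + j0)) h3
  simp only [Polynomial.finset_sum_coeff, Polynomial.coeff_C_mul,
    Polynomial.coeff_X_pow] at h4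
  rw [Finset.sum_eq_single j0 (fun b hb hne => by
        rw [Finset.mem_Icc] at hb
        rw [if_neg (by omega), mul_zero])
      (fun habs => absurd (Finset.mem_Icc.2 hj0) habs)] at h4
  rw [if_pos rfl, mul_one] at h4
  rw [Finset.sum_eq_zero (fun b hb => by
        rw [Finset.mem_Icc] at hb
        rw [if_neg (by omega), mul_zero])] at h4
  exact_mod_cast h4


/-- **The invariant lemma for Gessel's model.**
Let `A(y) = Σ_{0 ≤ j ≤ n/2 + n₀} a(j,n) yʲ tⁿ` be a Laurent series in `t` with polynomial
coefficients in `y` (so the support is bounded below in `n` and satisfies `j ≤ n/2 + n₀`).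
Let `Y₀, Y₁` be Laurent series in `t` with coefficients in `ℚ(u)`, of the form
`Y₀ = u/t + O(1)` and `Y₁ = (1/u)/t + O(1)`, related by the substitution `u ↦ 1/u`
(encoded by a ring automorphism `σ` of `ℚ(u)` sending `u` to `1/u`, applied
coefficientwise).  Then the substituted series `A(Y₀)` and `A(Y₁)` are well defined
Laurent series in `t` (each coefficient is a finite sum, and the support in `t` is
bounded below), and if `A(Y₀) = A(Y₁)` then `A(y)` is independent of `y`, i.e.
`a(j,n) = 0` for all `j ≠ 0`. -/
theorem gessel_invariant_lemma
    (n0 : ℕ) (a : ℕ → ℤ → ℚ)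
    (hsupp : ∀ (j : ℕ) (n : ℤ), a j n ≠ 0 → (2 * j : ℤ) ≤ n + 2 * n0)
    (hbound : ∃ N : ℤ, ∀ (j : ℕ) (n : ℤ), n < N → a j n = 0)
    (Y0 Y1 : LaurentSeries (RatFunc ℚ))
    (hY0low : ∀ m : ℤ, m < -1 → Y0.coeff m = 0)
    (hY1low : ∀ m : ℤ, m < -1 → Y1.coeff m = 0)
    (hY0lead : Y0.coeff (-1) = RatFunc.X)
    (hY1lead : Y1.coeff (-1) = (RatFunc.X)⁻¹)
    (σ : RatFunc ℚ ≃+* RatFunc ℚ)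
    (hσ : σ RatFunc.X = (RatFunc.X)⁻¹)
    (hrel : ∀ m : ℤ, Y1.coeff m = σ (Y0.coeff m)) :
    (∀ m : ℤ,
      (Function.support fun p : ℕ × ℤ => a p.1 p.2 * (Y0 ^ p.1).coeff (m - p.2)).Finite) ∧
    (∀ m : ℤ,
      (Function.support fun p : ℕ × ℤ => a p.1 p.2 * (Y1 ^ p.1).coeff (m - p.2)).Finite) ∧
    (∃ M : ℤ, ∀ m : ℤ, m < M →
      (∑ᶠ p : ℕ × ℤ, a p.1 p.2 * (Y0 ^ p.1).coeff (m - p.2)) = 0 ∧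
      (∑ᶠ p : ℕ × ℤ, a p.1 p.2 * (Y1 ^ p.1).coeff (m - p.2)) = 0) ∧
    ((∀ m : ℤ,
        (∑ᶠ p : ℕ × ℤ, a p.1 p.2 * (Y0 ^ p.1).coeff (m - p.2))
          = ∑ᶠ p : ℕ × ℤ, a p.1 p.2 * (Y1 ^ p.1).coeff (m - p.2)) →
      ∀ (j : ℕ) (n : ℤ), j ≠ 0 → a j n = 0) := by
  obtain ⟨N, hN⟩ := hbound
  -- finiteness of supports
  have hfin : ∀ (f : LaurentSeries (RatFunc ℚ)), (∀ m : ℤ, m < -1 → f.coeff m = 0) →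
      ∀ m : ℤ,
      (Function.support fun p : ℕ × ℤ =>
        (a p.1 p.2 : RatFunc ℚ) * (f ^ p.1).coeff (m - p.2)).Finite := by
    intro f hf m
    apply Set.Finite.subset (Set.finite_Icc ((0 : ℕ), N) ((m + 2 * n0).toNat, m + (m + 2 * n0)))
    rintro ⟨j, n⟩ hp
    simp only [Function.mem_support] at hp
    have ha : a j n ≠ 0 := by
      intro h0; apply hp; rw [h0]; push_cast; rw [zero_mul]
    have hc : (f ^ j).coeff (m - n) ≠ 0 := by
      intro h0; apply hp; rw [h0, mul_zero]
    have h1 : ¬(m - n < -(j : ℤ)) := fun hlt => hc (aux_pow_coeff_zero f hf j _ hlt)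
    have h2 := hsupp j n ha
    have h3 : ¬n < N := fun hlt => ha (hN j n hlt)
    simp only [Set.mem_Icc, Prod.le_def]
    push_cast at h2 ⊢
    omega
  refine ⟨hfin Y0 hY0low, hfin Y1 hY1low, ⟨-(2 * n0), ?_⟩, ?_⟩
  · -- vanishing for small m
    intro m hm
    have hz : ∀ (f : LaurentSeries (RatFunc ℚ)), (∀ k : ℤ, k < -1 → f.coeff k = 0) →
        (∑ᶠ p : ℕ × ℤ, (a p.1 p.2 : RatFunc ℚ) * (f ^ p.1).coeff (m - p.2)) = 0 := by
      intro f hf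
      apply finsum_eq_zero_of_forall_eq_zero
      rintro ⟨j, n⟩
      by_cases ha : a j n = 0
      · rw [ha]; push_cast; rw [zero_mul]
      · have h2 := hsupp j n ha
        have : m - n < -(j : ℤ) := by omega
        rw [aux_pow_coeff_zero f hf j _ this, mul_zero]
    exact ⟨hz Y0 hY0low, hz Y1 hY1low⟩
  · -- the main statement
    intro hEq j n hj
    by_contra ha
    set P : ℤ → Prop := fun z => ∃ (j' : ℕ) (n' : ℤ), j' ≠ 0 ∧ a j' n' ≠ 0 ∧ n' - j' = z with hP
    have hA1 : -(|N - 2 * (n0 : ℤ)|) ≤ N - 2 * n0 := neg_abs_le _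
    have hA2 : (0 : ℤ) ≤ |N - 2 * (n0 : ℤ)| := abs_nonneg _
    have hbdd : ∃ b : ℤ, ∀ z : ℤ, P z → b ≤ z := by
      refine ⟨-(|N - 2 * (n0 : ℤ)|), ?_⟩
      rintro z ⟨j', n', hj', ha', rfl⟩
      have h2 := hsupp j' n' ha'
      have h3 : ¬n' < N := fun hlt => ha' (hN j' n' hlt)
      omega
    obtain ⟨d, hPd, hmin⟩ := Int.exists_least_of_bdd hbdd ⟨n - j, j, n, hj, ha, rfl⟩
    set K : ℕ := (d + 2 * n0).toNat with hK
    set s : Finset (ℕ × ℤ) :=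
      insert (0, d) ((Finset.Icc 1 K).image fun i => (i, d + (i : ℤ))) with hs
    -- support of the coefficient-of-t^d sum is inside s
    have hsub : ∀ (f : LaurentSeries (RatFunc ℚ)), (∀ m : ℤ, m < -1 → f.coeff m = 0) →
        (Function.support fun p : ℕ × ℤ =>
          (a p.1 p.2 : RatFunc ℚ) * (f ^ p.1).coeff (d - p.2)) ⊆ ↑s := by
      intro f hf
      rintro ⟨j', n'⟩ hp
      simp only [Function.mem_support] at hp
      have ha' : a j' n' ≠ 0 := by
        intro h0; apply hp; rw [h0]; push_cast; rw [zero_mul]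
      have hc : (f ^ j').coeff (d - n') ≠ 0 := by
        intro h0; apply hp; rw [h0, mul_zero]
      have h1 : ¬(d - n' < -(j' : ℤ)) := fun hlt => hc (aux_pow_coeff_zero f hf j' _ hlt)
      by_cases hz : j' = 0
      · have : n' = d := by
          by_contra hne
          apply hc
          rw [hz, pow_zero, HahnSeries.coeff_one, if_neg (by omega)]
        simp only [hs, Finset.coe_insert, Set.mem_insert_iff]
        left
        rw [hz, this]
      · have hd' : d ≤ n' - j' := hmin _ ⟨j', n', hz, ha', rfl⟩
        have hn' : n' = d + (j' : ℤ) := by omega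
        have h2 := hsupp j' n' ha'
        simp only [hs, Finset.coe_insert, Set.mem_insert_iff, Finset.coe_image,
          Set.mem_image, Finset.mem_coe, Finset.mem_Icc]
        right
        exact ⟨j', ⟨by omega, by omega⟩, by rw [hn']⟩
    -- evaluate the coefficient of t^d
    have hval : ∀ (f : LaurentSeries (RatFunc ℚ)) (hf : ∀ m : ℤ, m < -1 → f.coeff m = 0),
        (∑ᶠ p : ℕ × ℤ, (a p.1 p.2 : RatFunc ℚ) * (f ^ p.1).coeff (d - p.2))
          = (a 0 d : RatFunc ℚ)
            + ∑ i ∈ Finset.Icc 1 K, (a i (d + i) : RatFunc ℚ) * (f.coeff (-1)) ^ i := by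
      intro f hf
      rw [finsum_eq_sum_of_support_subset _ (hsub f hf)]
      rw [hs, Finset.sum_insert (by
        simp only [Finset.mem_image, Finset.mem_Icc, Prod.mk.injEq]
        rintro ⟨i, ⟨hi1, _⟩, hi0, _⟩
        omega)]
      rw [Finset.sum_image (by
        rintro x _ y _ hxy
        exact (Prod.mk.injEq _ _ _ _ ▸ hxy : _ ∧ _).1)]
      congr 1
      · simp [HahnSeries.coeff_one]
      · refine Finset.sum_congr rfl fun i hi => ?_
        have he : d - (d + (i : ℤ)) = -(i : ℤ) := by ring
        rw [he, aux_pow_coeff_bot f hf i]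
    have heq := hEq d
    rw [hval Y0 hY0low, hval Y1 hY1low, hY0lead, hY1lead] at heq
    have heq2 : ∑ i ∈ Finset.Icc 1 K, ((a i (d + i) : ℚ) : RatFunc ℚ) * RatFunc.X ^ i
        = ∑ i ∈ Finset.Icc 1 K, ((a i (d + i) : ℚ) : RatFunc ℚ) * (RatFunc.X)⁻¹ ^ i :=
      add_left_cancel heq
    have hzero := aux_indep K (fun i => a i (d + i)) heq2
    obtain ⟨j', n', hj', ha', hd'⟩ := hPd
    have h2 := hsupp j' n' ha'
    have hmem : j' ∈ Finset.Icc 1 K := Finset.mem_Icc.2 ⟨by omega, by omega⟩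
    have : a j' (d + j') = 0 := hzero j' hmem
    apply ha'
    rw [show n' = d + (j' : ℤ) by omega]
    exact this
end

section
/- Let K(x,y) be the kernel of a quadrant walk model, a polynomial in x, y whose coefficient of xy is t·(step polynomial terms) - 1, so that the monomial xy appears with coefficient of t-valuation 0. If A(x) ∈ ℝ[[x,t]], B(y) ∈ ℝ[[y,t]] and C(x,y) ∈ ℝ[[x,y,t]] satisfy A(x) - B(y) = K(x,y)·C(x,y), then C(x,y) = 0 and A(x) = B(y) is a series in t alone. -/
open MvPowerSeries

namespace MvPowerSeries

variable {σ R : Type*} [CommRing R]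

/-- `X k ^ n ∣ C` implies `X k ^ (n + 1) ∣ C`: at an exponent `m + d` with `d k ≤ n`, the
coefficient of `P * C` vanishes and that of `monomial m 1 * C` is `coeff d C`. -/
theorem eq_zero_of_coeff_add_sub_monomial_mul_eq_zero {k : σ} {m : σ →₀ ℕ} (hm : m k = 0)
    {P C : MvPowerSeries σ R} (hP : X k ∣ P)
    (h : ∀ d, coeff (m + d) ((P - monomial m 1) * C) = 0) : C = 0 := by
  have hdvd : ∀ n, X k ^ n ∣ C := by
    intro n
    induction n with
    | zero => exact one_dvd C
    | succ n ih =>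
      have hPC : X k ^ (n + 1) ∣ P * C :=
        pow_succ' (X k : MvPowerSeries σ R) n ▸ mul_dvd_mul hP ih
      refine X_pow_dvd_iff.mpr fun d hd => ?_
      have hd' : (m + d) k < n + 1 := by simpa [hm] using hd
      simpa [sub_mul, coeff_add_monomial_mul, X_pow_dvd_iff.mp hPC (m + d) hd'] using h d
  ext d
  exact X_pow_dvd_iff.mp (hdvd (d k + 1)) d (Nat.lt_succ_self _)

end MvPowerSeries

/-- **Generic invariant lemma.**  Let `K(x,y)` be the kernel of a quadrant walk model with
(shifted) step set `S ⊆ {0,1,2}²` (the pair `(p,q) ∈ S` encodes the small step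
`(p-1, q-1) ∈ {-1,0,1}²`), so that `K = t·Σ_{(p,q)∈S} xᵖyᑫ - xy` and the monomial `xy`
appears with a coefficient of `t`-valuation `0`.  If `A(x) ∈ ℝ[[x,t]]`,
`B(y) ∈ ℝ[[y,t]]` and `C(x,y) ∈ ℝ[[x,y,t]]` satisfy `A(x) - B(y) = K(x,y)·C(x,y)`,
then `C = 0` and `A = B` is a power series in `t` alone.
(Variables: `0 = x`, `1 = y`, `2 = t`.) -/
theorem generic_invariant_lemma (S : Finset (Fin 3 × Fin 3))
    (A B C : MvPowerSeries (Fin 3) ℝ)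
    (hA : ∀ d : Fin 3 →₀ ℕ, d 1 ≠ 0 → MvPowerSeries.coeff (R := ℝ) d A = 0)
    (hB : ∀ d : Fin 3 →₀ ℕ, d 0 ≠ 0 → MvPowerSeries.coeff (R := ℝ) d B = 0)
    (hK : A - B =
      ((∑ s ∈ S, (MvPowerSeries.X 2 : MvPowerSeries (Fin 3) ℝ)
          * (MvPowerSeries.X 0) ^ (s.1 : ℕ) * (MvPowerSeries.X 1) ^ (s.2 : ℕ))
        - MvPowerSeries.X 0 * MvPowerSeries.X 1) * C) :
    C = 0 ∧ A = B ∧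
      ∀ d : Fin 3 →₀ ℕ, (d 0 ≠ 0 ∨ d 1 ≠ 0) → MvPowerSeries.coeff (R := ℝ) d A = 0 := by
  set m : Fin 3 →₀ ℕ := Finsupp.single 0 1 + Finsupp.single 1 1
  have hxy : (X 0 * X 1 : MvPowerSeries (Fin 3) ℝ) = monomial m 1 := by
    simp only [X, monomial_mul_monomial, one_mul, m]
  have hX2 : (X 2 : MvPowerSeries (Fin 3) ℝ) ∣
      ∑ s ∈ S, X 2 * X 0 ^ (s.1 : ℕ) * X 1 ^ (s.2 : ℕ) :=
    Finset.dvd_sum fun s _ => by rw [mul_assoc]; exact dvd_mul_right _ _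
  have hC : C = 0 := by
    refine eq_zero_of_coeff_add_sub_monomial_mul_eq_zero (m := m) (by simp [m]) hX2 fun d => ?_
    rw [← hxy, ← hK, map_sub, hA _ (by simp [m]), hB _ (by simp [m]), sub_zero]
  have hAB : A = B := sub_eq_zero.mp (by rw [hK, hC, mul_zero])
  exact ⟨hC, hAB, fun d hd => hd.elim (fun h => hAB ▸ hB d h) (hA d)⟩
end

section
/- Let G be a finite group of order 2n generated by two involutions Φ and Ψ, with Θ = ΨΦ, acting on pairs (x,y) where Φ fixes the second coordinate and Ψ fixes the first. Let sign: G → {±1} be the homomorphism with sign(Φ) = sign(Ψ) = -1. Then in the group algebra ℚ[G], with τ = -(1/n)Σ_{i=1}^{n-1} i·Θⁱ and τ̃ = -(1/n)Σ_{i=1}^{n-1} i·Θ⁻ⁱ, the identity τ + τΨ + τ̃ + τ̃Φ + (1 - 1/(2n))σ = id - (1/(2n))α holds, where σ = Σ_{γ∈G} γ and α = Σ_{γ∈G} sign(γ)·γ. -/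
open scoped BigOperators
open Finset in

/-- **Group algebra identity for dihedral groups.**  Let `G` be a finite group of order
`2n` generated by two involutions `Φ` and `Ψ`, with `Θ = ΨΦ` of order dividing `n`, every
element being `Θⁱ` or `ΘⁱΦ` with `i < n`.  Let `sgn : G →* ℚ` be the sign homomorphism
with `sgn Φ = sgn Ψ = -1`.  Then in `ℚ[G]`, with
`τ = -(1/n)·Σ_{i=1}^{n-1} i·Θⁱ` and `τ̃ = -(1/n)·Σ_{i=1}^{n-1} i·Θ⁻ⁱ`, one has
`τ + τΨ + τ̃ + τ̃Φ + (1 - 1/(2n))·σ = id - (1/(2n))·α`,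
where `σ = Σ_{γ∈G} γ` and `α = Σ_{γ∈G} sgn(γ)·γ`. -/
theorem dihedral_group_algebra_identity {G : Type*} [Group G] [Fintype G] [DecidableEq G]
    (n : ℕ) (hn : 0 < n) (hcard : Fintype.card G = 2 * n)
    (Φ Ψ : G) (hΦ : Φ * Φ = 1) (hΨ : Ψ * Ψ = 1)
    (hΘ : (Ψ * Φ) ^ n = 1)
    (hgen : ∀ g : G, ∃ i : ℕ, i < n ∧ (g = (Ψ * Φ) ^ i ∨ g = (Ψ * Φ) ^ i * Φ))
    (sgn : G →* ℚ) (hsΦ : sgn Φ = -1) (hsΨ : sgn Ψ = -1) :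
    (let Θ : G := Ψ * Φ
     let o : G → MonoidAlgebra ℚ G := fun g => MonoidAlgebra.of ℚ G g
     let τ : MonoidAlgebra ℚ G :=
       (-(n : ℚ)⁻¹) • ∑ i ∈ Finset.Icc 1 (n - 1), (i : ℚ) • o (Θ ^ i)
     let τ' : MonoidAlgebra ℚ G :=
       (-(n : ℚ)⁻¹) • ∑ i ∈ Finset.Icc 1 (n - 1), (i : ℚ) • o ((Θ ^ i)⁻¹)
     let σ : MonoidAlgebra ℚ G := ∑ g : G, o g
     let α : MonoidAlgebra ℚ G := ∑ g : G, sgn g • o g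
     τ + τ * o Ψ + τ' + τ' * o Φ + (1 - (2 * (n : ℚ))⁻¹) • σ
       = 1 - (2 * (n : ℚ))⁻¹ • α) := by
  intro Θ o τ τ' σ α
  have hn' : (n : ℚ) ≠ 0 := Nat.cast_ne_zero.mpr hn.ne'
  have homul : ∀ a b : G, o (a * b) = o a * o b := fun a b => map_mul (MonoidAlgebra.of ℚ G) a b
  have ho1 : o 1 = 1 := map_one (MonoidAlgebra.of ℚ G)
  set A : MonoidAlgebra ℚ G := ∑ i ∈ range n, o (Θ ^ i) with hA
  set B : MonoidAlgebra ℚ G := ∑ i ∈ range n, o (Θ ^ i * Φ) with hB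
  -- inverse powers
  have hinv : ∀ i ∈ Finset.Icc 1 (n - 1), (Θ ^ i)⁻¹ = Θ ^ (n - i) := by
    intro i hi
    simp only [Finset.mem_Icc] at hi
    have h : Θ ^ i * Θ ^ (n - i) = 1 := by
      rw [← pow_add, Nat.add_sub_cancel' (by omega : i ≤ n)]; exact hΘ
    exact inv_eq_of_mul_eq_one_right h
  -- rewrite τ'
  have hτ' : τ' = (-(n : ℚ)⁻¹) • ∑ i ∈ Finset.Icc 1 (n - 1), ((n - i : ℕ) : ℚ) • o (Θ ^ i) := by
    simp only [τ']
    congr 1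
    refine Finset.sum_nbij' (fun i => n - i) (fun i => n - i) ?_ ?_ ?_ ?_ ?_
    · intro a ha; simp only [Finset.mem_Icc] at *; (try dsimp only); omega
    · intro a ha; simp only [Finset.mem_Icc] at *; (try dsimp only); omega
    · intro a ha; simp only [Finset.mem_Icc] at ha; (try dsimp only); omega
    · intro a ha; simp only [Finset.mem_Icc] at ha; (try dsimp only); omega
    · intro a ha
      have h1 : n - (n - a) = a := by simp only [Finset.mem_Icc] at ha; omega
      rw [hinv a ha, h1]
  have hrange1 : Finset.range n = insert 0 (Finset.Icc 1 (n - 1)) := by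
    ext x; simp only [Finset.mem_range, Finset.mem_insert, Finset.mem_Icc]; omega
  have h0notin : (0 : ℕ) ∉ Finset.Icc 1 (n - 1) := by simp
  have hA' : A = 1 + ∑ i ∈ Finset.Icc 1 (n - 1), o (Θ ^ i) := by
    rw [hA, hrange1, Finset.sum_insert h0notin, pow_zero, ho1]
  -- h1 : τ + τ' = 1 - A
  have key1 : τ + τ' = 1 - A := by
    rw [hτ']; simp only [τ]
    rw [← smul_add, ← Finset.sum_add_distrib]
    have hcongr : ∀ i ∈ Finset.Icc 1 (n - 1),
        (i : ℚ) • o (Θ ^ i) + ((n - i : ℕ) : ℚ) • o (Θ ^ i) = (n : ℚ) • o (Θ ^ i) := by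
      intro i hi; simp only [Finset.mem_Icc] at hi
      rw [← add_smul]
      congr 1
      rw [Nat.cast_sub (by omega : i ≤ n)]; ring
    rw [Finset.sum_congr rfl hcongr, ← Finset.smul_sum, smul_smul, hA',
      show (-(n : ℚ)⁻¹ * n) = -1 by field_simp, neg_one_smul]
    abel
  -- h2' : τ * o Θ + τ' = ((1 - n)/n) • A
  have key2' : τ * o Θ + τ' = (((1 : ℚ) - n) / n) • A := by
    by_cases h1n : n = 1
    · subst h1n
      have he : Finset.Icc 1 0 = (∅ : Finset ℕ) := rfl
      simp only [τ, τ', he, Finset.sum_empty, smul_zero, zero_mul, add_zero]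
      norm_num
    · have h2n : 2 ≤ n := by omega
      have hτΘ : τ * o Θ = (-(n : ℚ)⁻¹) • ∑ j ∈ Finset.Icc 2 n, ((j - 1 : ℕ) : ℚ) • o (Θ ^ j) := by
        simp only [τ, smul_mul_assoc, Finset.sum_mul]
        congr 1
        refine Finset.sum_nbij' (fun i => i + 1) (fun i => i - 1) ?_ ?_ ?_ ?_ ?_
        · intro a ha; simp only [Finset.mem_Icc] at *; (try dsimp only); omega
        · intro a ha; simp only [Finset.mem_Icc] at *; (try dsimp only); omega
        · intro a ha; (try dsimp only); omega
        · intro a ha; simp only [Finset.mem_Icc] at ha; (try dsimp only); omega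
        · intro a ha
          simp only [Finset.mem_Icc] at ha
          rw [← homul, ← pow_succ]
          congr 1
      have hsplit_top : Finset.Icc 2 n = insert n (Finset.Icc 2 (n - 1)) := by
        ext x; simp only [Finset.mem_Icc, Finset.mem_insert]; omega
      have hnnotin : n ∉ Finset.Icc 2 (n - 1) := by simp only [Finset.mem_Icc]; omega
      have hsplit_bot : Finset.Icc 1 (n - 1) = insert 1 (Finset.Icc 2 (n - 1)) := by
        ext x; simp only [Finset.mem_Icc, Finset.mem_insert]; omega
      have h1notin : (1 : ℕ) ∉ Finset.Icc 2 (n - 1) := by simp only [Finset.mem_Icc]; omega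
      have hcast : ((n - 1 : ℕ) : ℚ) = (n : ℚ) - 1 := by
        rw [Nat.cast_sub (by omega : 1 ≤ n)]; norm_num
      have hτΘ2 : τ * o Θ = (-(n : ℚ)⁻¹) • (((n : ℚ) - 1) • 1
          + ∑ j ∈ Finset.Icc 2 (n - 1), ((j - 1 : ℕ) : ℚ) • o (Θ ^ j)) := by
        rw [hτΘ, hsplit_top, Finset.sum_insert hnnotin, hΘ, ho1, hcast]
      have hτ'2 : τ' = (-(n : ℚ)⁻¹) • (((n : ℚ) - 1) • o Θ
          + ∑ j ∈ Finset.Icc 2 (n - 1), ((n - j : ℕ) : ℚ) • o (Θ ^ j)) := by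
        rw [hτ', hsplit_bot, Finset.sum_insert h1notin, pow_one, hcast]
      have hA2 : A = 1 + o Θ + ∑ j ∈ Finset.Icc 2 (n - 1), o (Θ ^ j) := by
        rw [hA']
        rw [hsplit_bot, Finset.sum_insert h1notin, pow_one]
        abel
      have hsum2 : ∑ j ∈ Finset.Icc 2 (n - 1), ((j - 1 : ℕ) : ℚ) • o (Θ ^ j)
          + ∑ j ∈ Finset.Icc 2 (n - 1), ((n - j : ℕ) : ℚ) • o (Θ ^ j)
          = ((n : ℚ) - 1) • ∑ j ∈ Finset.Icc 2 (n - 1), o (Θ ^ j) := by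
        rw [← Finset.sum_add_distrib, Finset.smul_sum]
        refine Finset.sum_congr rfl ?_
        intro j hj; simp only [Finset.mem_Icc] at hj
        rw [← add_smul]
        congr 1
        rw [Nat.cast_sub (by omega : 1 ≤ j), Nat.cast_sub (by omega : j ≤ n)]; ring
      rw [hτΘ2, hτ'2, hA2, ← smul_add]
      rw [show ((n:ℚ) - 1) • (1 : MonoidAlgebra ℚ G)
          + ∑ j ∈ Finset.Icc 2 (n - 1), ((j - 1 : ℕ) : ℚ) • o (Θ ^ j)
          + (((n:ℚ) - 1) • o Θ
          + ∑ j ∈ Finset.Icc 2 (n - 1), ((n - j : ℕ) : ℚ) • o (Θ ^ j))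
          = ((n:ℚ) - 1) • ((1 : MonoidAlgebra ℚ G) + o Θ
          + ∑ j ∈ Finset.Icc 2 (n - 1), o (Θ ^ j)) by
        rw [smul_add, smul_add, ← hsum2]; abel]
      rw [smul_smul]
      congr 1
      field_simp
      try ring
  -- h2 : τ * o Ψ + τ' * o Φ = ((1-n)/n) • B
  have hΨeq : Θ * Φ = Ψ := by
    show Ψ * Φ * Φ = Ψ
    rw [mul_assoc, hΦ, mul_one]
  have hAB : A * o Φ = B := by
    rw [hA, hB, Finset.sum_mul]
    exact Finset.sum_congr rfl fun i _ => (homul _ _).symm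
  have key2 : τ * o Ψ + τ' * o Φ = (((1 : ℚ) - n) / n) • B := by
    have h : τ * o Ψ = (τ * o Θ) * o Φ := by rw [mul_assoc, ← homul, hΨeq]
    rw [h, ← add_mul, key2', smul_mul_assoc, hAB]
  -- enumeration of G
  have hsum : ∀ F : G → MonoidAlgebra ℚ G,
      ∑ g : G, F g = ∑ i ∈ range n, F (Θ ^ i) + ∑ i ∈ range n, F (Θ ^ i * Φ) := by
    set I1 := (range n).image (fun i => Θ ^ i) with hI1
    set I2 := (range n).image (fun i => Θ ^ i * Φ) with hI2
    have hunion : I1 ∪ I2 = Finset.univ := by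
      ext g
      simp only [hI1, hI2, Finset.mem_union, Finset.mem_image, Finset.mem_range,
        Finset.mem_univ, iff_true]
      obtain ⟨i, hi, h | h⟩ := hgen g
      · exact Or.inl ⟨i, hi, h.symm⟩
      · exact Or.inr ⟨i, hi, h.symm⟩
    have hc1 : I1.card ≤ n := le_trans Finset.card_image_le (by simp)
    have hc2 : I2.card ≤ n := le_trans Finset.card_image_le (by simp)
    have hcu : (I1 ∪ I2).card = 2 * n := by rw [hunion, Finset.card_univ, hcard]
    have hie : (I1 ∪ I2).card + (I1 ∩ I2).card = I1.card + I2.card :=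
      Finset.card_union_add_card_inter I1 I2
    have hc1' : I1.card = n := by omega
    have hc2' : I2.card = n := by omega
    have hi0 : (I1 ∩ I2).card = 0 := by omega
    have hdisj : Disjoint I1 I2 := by
      rw [Finset.disjoint_iff_inter_eq_empty]
      exact Finset.card_eq_zero.mp hi0
    have hinj1 : ∀ x ∈ range n, ∀ y ∈ range n, Θ ^ x = Θ ^ y → x = y := by
      have := Finset.card_image_iff.mp (by rw [← hI1, hc1', card_range] :
        ((range n).image (fun i => Θ ^ i)).card = (range n).card)
      exact fun x hx y hy h => this (Finset.mem_coe.mpr hx) (Finset.mem_coe.mpr hy) h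
    have hinj2 : ∀ x ∈ range n, ∀ y ∈ range n, Θ ^ x * Φ = Θ ^ y * Φ → x = y := by
      have := Finset.card_image_iff.mp (by rw [← hI2, hc2', card_range] :
        ((range n).image (fun i => Θ ^ i * Φ)).card = (range n).card)
      exact fun x hx y hy h => this (Finset.mem_coe.mpr hx) (Finset.mem_coe.mpr hy) h
    intro F
    calc ∑ g : G, F g = ∑ g ∈ I1 ∪ I2, F g := by rw [hunion]
      _ = ∑ g ∈ I1, F g + ∑ g ∈ I2, F g := Finset.sum_union hdisj
      _ = _ := by rw [hI1, hI2, Finset.sum_image hinj1, Finset.sum_image hinj2]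
  have key3 : σ = A + B := by
    simp only [σ]; rw [hsum o, hA, hB]
  have hsΘ : sgn Θ = 1 := by
    show sgn (Ψ * Φ) = 1
    rw [map_mul, hsΦ, hsΨ]; norm_num
  have key4 : α = A - B := by
    simp only [α]
    rw [hsum (fun g => sgn g • o g)]
    have e1 : ∀ i ∈ range n, sgn (Θ ^ i) • o (Θ ^ i) = o (Θ ^ i) := by
      intro i _; rw [map_pow, hsΘ, one_pow, one_smul]
    have e2 : ∀ i ∈ range n, sgn (Θ ^ i * Φ) • o (Θ ^ i * Φ) = -o (Θ ^ i * Φ) := by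
      intro i _; rw [map_mul, map_pow, hsΘ, one_pow, hsΦ, one_mul, neg_one_smul]
    rw [Finset.sum_congr rfl e1, Finset.sum_congr rfl e2, Finset.sum_neg_distrib, hA, hB]
    abel
  have rearr : τ + τ * o Ψ + τ' + τ' * o Φ = (τ + τ') + (τ * o Ψ + τ' * o Φ) := by abel
  rw [rearr, key1, key2, key3, key4]
  match_scalars <;> (field_simp; try ring)
end

section
/- Let S be a quadrant model whose group G(S) is finite, and let H(x,y) ∈ ℚ(x,y). If H is decoupled (H(x,y) = F(x) + G(y) whenever K(x,y) = 0, for rational F, G), then the alternating orbit sum H_α(x,y) := Σ_{γ∈G(S)} sign(γ)·H(γ(x,y)) vanishes identically. -/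
open scoped BigOperators

/-!
The summand `f (π₁ (γ • v))` is unchanged when `γ` is replaced by `Ψ * γ`, while the sign flips,
so these terms cancel in pairs `{γ, Ψ * γ}`; likewise the terms `g (π₂ (γ • v))` cancel in pairs
`{γ, Φ * γ}`.
-/

theorem sum_sign_mul_eq_zero_of_left_invariant {G R : Type*} [Group G] [Fintype G] [Ring R]
    (sgn : G →* ℤ) (σ : G) (hσ2 : σ * σ = 1) (hsσ : sgn σ = -1) (φ : G → R)
    (hφ : ∀ γ, φ (σ * γ) = φ γ) :
    ∑ γ : G, ((sgn γ : ℤ) : R) * φ γ = 0 := by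
  have hσ1 : σ ≠ 1 := fun h => by simp [h] at hsσ
  refine Finset.sum_involution (fun γ _ => σ * γ) (fun γ _ => ?_) (fun γ _ _ h => ?_)
    (fun γ _ => Finset.mem_univ _) (fun γ _ => by rw [← mul_assoc, hσ2, one_mul])
  · rw [hφ, map_mul, hsσ, Int.cast_mul, Int.cast_neg, Int.cast_one, neg_one_mul, neg_mul,
      add_neg_cancel]
  · exact hσ1 (mul_eq_right.mp h)

theorem decoupled_implies_alternating_orbit_sum_zero_general
    {G V A F : Type*} [Group G] [Fintype G] [Field F] [MulAction G V]
    (Φ Ψ : G) (hΦ2 : Φ * Φ = 1) (hΨ2 : Ψ * Ψ = 1)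
    (π₁ π₂ : V → A)
    (hπ₂ : ∀ v : V, π₂ (Φ • v) = π₂ v)
    (hπ₁ : ∀ v : V, π₁ (Ψ • v) = π₁ v)
    (sgn : G →* ℤ) (hsΦ : sgn Φ = -1) (hsΨ : sgn Ψ = -1)
    (H : V → F) (f g : A → F)
    (hdec : ∀ v : V, H v = f (π₁ v) + g (π₂ v)) :
    ∀ v : V, ∑ γ : G, ((sgn γ : ℤ) : F) * H (γ • v) = 0 := by
  intro v
  have hf : ∑ γ : G, ((sgn γ : ℤ) : F) * f (π₁ (γ • v)) = 0 :=
    sum_sign_mul_eq_zero_of_left_invariant sgn Ψ hΨ2 hsΨ _ fun γ => by rw [mul_smul, hπ₁]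
  have hg : ∑ γ : G, ((sgn γ : ℤ) : F) * g (π₂ (γ • v)) = 0 :=
    sum_sign_mul_eq_zero_of_left_invariant sgn Φ hΦ2 hsΦ _ fun γ => by rw [mul_smul, hπ₂]
  simp only [hdec, mul_add, Finset.sum_add_distrib, hf, hg, add_zero]

/-- Let `S` be a quadrant model whose group `G(S)` is finite, generated by two involutions
`Φ` and `Ψ`, acting on the pairs `(x,y)` canceling the kernel in such a way that `Φ`
preserves the second coordinate and `Ψ` the first, with sign homomorphism `sgn` taking the
value `-1` on both generators.  If `H(x,y)` is decoupled, i.e. `H(v) = f(π₁ v) + g(π₂ v)`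
for all pairs `v` canceling the kernel, then the alternating orbit sum
`H_α(v) = Σ_{γ ∈ G} sign(γ)·H(γ·v)` vanishes identically. -/
theorem decoupled_implies_alternating_orbit_sum_zero
    {G V A F : Type*} [Group G] [Fintype G] [Field F] [MulAction G V]
    (Φ Ψ : G) (hΦ2 : Φ * Φ = 1) (hΨ2 : Ψ * Ψ = 1) (hΦ1 : Φ ≠ 1) (hΨ1 : Ψ ≠ 1)
    (hgen : Subgroup.closure ({Φ, Ψ} : Set G) = ⊤)
    (π₁ π₂ : V → A)
    (hπ₂ : ∀ v : V, π₂ (Φ • v) = π₂ v)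
    (hπ₁ : ∀ v : V, π₁ (Ψ • v) = π₁ v)
    (sgn : G →* ℤ) (hsΦ : sgn Φ = -1) (hsΨ : sgn Ψ = -1)
    (H : V → F) (f g : A → F)
    (hdec : ∀ v : V, H v = f (π₁ v) + g (π₂ v)) :
    ∀ v : V, ∑ γ : G, ((sgn γ : ℤ) : F) * H (γ • v) = 0 :=
  decoupled_implies_alternating_orbit_sum_zero_general Φ Ψ hΦ2 hΨ2 π₁ π₂ hπ₂ hπ₁ sgn hsΦ hsΨ H f g
    hdec
end

section
/- For Gessel's model with group of order 8 acting by (x,y) ↦ (x,y), (1/(xy), y), (1/(xy), x²y), (1/x, x²y), (1/x, 1/y), (xy, 1/y), (xy, 1/(x²y)), (x, 1/(x²y)) (with alternating signs +,-,+,-,+,-,+,-), the alternating sum H_α(x,y) of H(x,y) = x^{a+1}y^{b+1} over the group vanishes if and only if a = b or a = 2b+1. -/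
open Polynomial

private lemma gessel_key (a b : ℕ) (t : ℂ) (ht : t ≠ 0) :
    ((2:ℂ)^(2*(a+1)+2*(b+1)) - 2^(4*(b+1))) * t^(a+1+2*(b+1))
      + ((2:ℂ)^(4*(b+1)) - 2^(2*(b+1))) * t^(2*(b+1))
      + ((2:ℂ)^(2*(b+1)) - 2^(2*(a+1))) * t^(a+1)
      + ((2:ℂ)^(2*(a+1)) - 2^(2*(a+1)+2*(b+1))) * t^(2*(a+1))
    = (2:ℂ)^(a+1) * 2^(2*(b+1)) * t ^ (a+1+b+1) *
        ((2:ℂ) ^ (a + 1) * t ^ (b + 1) - ((2 * t)⁻¹) ^ (a + 1) * t ^ (b + 1)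
            + ((2 * t)⁻¹) ^ (a + 1) * ((2:ℂ) ^ 2 * t) ^ (b + 1)
            - ((2:ℂ)⁻¹) ^ (a + 1) * ((2:ℂ) ^ 2 * t) ^ (b + 1)
            + ((2:ℂ)⁻¹) ^ (a + 1) * (t⁻¹) ^ (b + 1)
            - (2 * t) ^ (a + 1) * (t⁻¹) ^ (b + 1)
            + (2 * t) ^ (a + 1) * (((2:ℂ) ^ 2 * t)⁻¹) ^ (b + 1)
            - (2:ℂ) ^ (a + 1) * (((2:ℂ) ^ 2 * t)⁻¹) ^ (b + 1)) := by
  have h2t : (2:ℂ) * t ≠ 0 := by simp [ht]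
  have h4t : (2:ℂ) ^ 2 * t ≠ 0 := by simp [ht]
  have c1 : ((2*t:ℂ))⁻¹^(a+1) * (2*t)^(a+1) = 1 := by
    rw [inv_pow]; exact inv_mul_cancel₀ (pow_ne_zero _ h2t)
  have c2 : ((2:ℂ))⁻¹^(a+1) * 2^(a+1) = 1 := by
    rw [inv_pow]; exact inv_mul_cancel₀ (pow_ne_zero _ two_ne_zero)
  have c3 : (t⁻¹)^(b+1) * t^(b+1) = 1 := by
    rw [inv_pow]; exact inv_mul_cancel₀ (pow_ne_zero _ ht)
  have c4 : (((2:ℂ)^2*t))⁻¹^(b+1) * ((2:ℂ)^2*t)^(b+1) = 1 := by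
    rw [inv_pow]; exact inv_mul_cancel₀ (pow_ne_zero _ h4t)
  have c5 : ((4:ℂ))^b = 2^(2*b) := by rw [pow_mul]; norm_num
  linear_combination
    (2^(2*(b+1)) * t^(2*(b+1)) - 2^(2*(b+1)) * t^(b+1) * ((2:ℂ)^2*t)^(b+1)) * c1
    + (t^(a+1+b+1) * 2^(2*(b+1)) * ((2:ℂ)^2*t)^(b+1)
        - 2^(2*(b+1)) * t^(a+1) * (t⁻¹)^(b+1) * t^(b+1)) * c2
    + (-(2:ℂ)^(2*(b+1))*t^(a+1) + (2*t)^(a+1) * 2^(a+1) * 2^(2*(b+1)) * t^(a+1)) * c3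
    + (-((2*t:ℂ))^(a+1) * 2^(a+1) * t^(a+1) + 2^(2*(a+1)) * t^(a+1)) * c4
    + (-4*t^2*t^a*t^b*t⁻¹^(b+1)*((1/4:ℂ))^b*2^(2*a) - 16*t^2*t^(2*b)*2^(2*b)
       + 16*t^3*t^a*t^(2*b)*2^(2*b) + 4*t^3*t^(2*a)*t^b*t⁻¹^(b+1)*((1/4:ℂ))^b*2^(2*a)) * c5

/-- For Gessel's model, the group of order 8 acts by
`(x,y), (1/(xy),y), (1/(xy),x²y), (1/x,x²y), (1/x,1/y), (xy,1/y), (xy,1/(x²y)),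
(x,1/(x²y))` with alternating signs `+,-,+,-,+,-,+,-`.  The alternating sum of
`H(x,y) = x^{a+1}·y^{b+1}` over the group vanishes (identically, as a Laurent
polynomial, i.e. at every `x ≠ 0`, `y ≠ 0` in `ℂ`) if and only if `a = b` or
`a = 2b + 1`. -/
theorem gessel_alternating_orbit_sum_vanishes_iff (a b : ℕ) :
    (let H : ℂ → ℂ → ℂ := fun u v => u ^ (a + 1) * v ^ (b + 1)
     ∀ x y : ℂ, x ≠ 0 → y ≠ 0 →
       H x y - H ((x * y)⁻¹) y + H ((x * y)⁻¹) (x ^ 2 * y) - H x⁻¹ (x ^ 2 * y)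
         + H x⁻¹ y⁻¹ - H (x * y) y⁻¹ + H (x * y) ((x ^ 2 * y)⁻¹)
         - H x ((x ^ 2 * y)⁻¹) = 0)
    ↔ (a = b ∨ a = 2 * b + 1) := by
  simp only
  constructor
  · intro h
    by_contra hc
    push_neg at hc
    obtain ⟨hab, hab2⟩ := hc
    set P : ℂ[X] := C ((2:ℂ)^(2*(a+1)+2*(b+1)) - 2^(4*(b+1))) * X ^ (a+1+2*(b+1))
        + C ((2:ℂ)^(4*(b+1)) - 2^(2*(b+1))) * X ^ (2*(b+1))
        + C ((2:ℂ)^(2*(b+1)) - 2^(2*(a+1))) * X ^ (a+1)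
        + C ((2:ℂ)^(2*(a+1)) - 2^(2*(a+1)+2*(b+1))) * X ^ (2*(a+1)) with hP
    have hroot : ∀ t : ℂ, t ≠ 0 → P.eval t = 0 := by
      intro t ht
      have h2 := h 2 t two_ne_zero ht
      have key := gessel_key a b t ht
      simp only [hP, eval_add, eval_mul, eval_C, eval_pow, eval_X]
      rw [key, h2, mul_zero]
    have hP0 : P = 0 := by
      apply Polynomial.eq_zero_of_infinite_isRoot
      apply Set.Infinite.mono (s := {(0:ℂ)}ᶜ)
      · intro t ht
        exact hroot t ht
      · exact (Set.finite_singleton 0).infinite_compl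
    have hcoeff := congrArg (fun p => Polynomial.coeff p (a+1)) hP0
    have e1 : a + 1 ≠ a+1+2*(b+1) := by omega
    have e2 : a + 1 ≠ 2*(b+1) := by omega
    have e3 : a + 1 ≠ 2*(a+1) := by omega
    simp only [hP, coeff_add, coeff_C_mul, coeff_X_pow, coeff_zero,
      e1, e2, e3, if_false, if_true, eq_self_iff_true,
      mul_zero, mul_one, add_zero, zero_add] at hcoeff
    have h2eq : (2:ℂ) ^ (2*(b+1)) = 2 ^ (2*(a+1)) := by linear_combination hcoeff
    have hnat : (2:ℕ) ^ (2*(b+1)) = 2 ^ (2*(a+1)) := by exact_mod_cast h2eq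
    have := Nat.pow_right_injective (le_refl 2) hnat
    omega
  · rintro (rfl | rfl) <;> intro x y hx hy
    · have g1 : (x*y)⁻¹ * y = x⁻¹ := by field_simp <;> ring
      have g2 : (x*y)⁻¹ * (x^2*y) = x := by field_simp <;> ring
      have g3 : x⁻¹ * (x^2*y) = x*y := by field_simp <;> ring
      have g4 : (x*y) * y⁻¹ = x := by field_simp <;> ring
      have g5 : (x*y) * (x^2*y)⁻¹ = x⁻¹ := by field_simp <;> ring
      have g6 : x * (x^2*y)⁻¹ = x⁻¹ * y⁻¹ := by field_simp <;> ring
      simp only [← mul_pow, g1, g2, g3, g4, g5, g6]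
      ring
    · have e : 2*b+1+1 = 2*(b+1) := by ring
      simp only [e, pow_mul]
      have g1 : ((x*y)⁻¹)^2 * y = (x⁻¹)^2 * y⁻¹ := by field_simp <;> ring
      have g2 : ((x*y)⁻¹)^2 * (x^2*y) = y⁻¹ := by field_simp <;> ring
      have g3 : (x⁻¹)^2 * (x^2*y) = y := by field_simp <;> ring
      have g4 : (x*y)^2 * y⁻¹ = x^2*y := by field_simp <;> ring
      have g5 : (x*y)^2 * (x^2*y)⁻¹ = y := by field_simp <;> ring
      have g6 : x^2 * (x^2*y)⁻¹ = y⁻¹ := by field_simp <;> ring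
      simp only [← mul_pow, g1, g2, g3, g4, g5, g6]
      ring
end

section
/- If a quadrant model S has an infinite group G(S), then S admits no rational invariants: there is no I(x) ∈ ℚ(x,t)\ℚ(t) and J(y) ∈ ℚ(y,t) such that K(x,y) divides the numerator of I(x) - J(y). -/
/-!
On the kernel curve `t · P(x,y) = x y`, where `P(x,y) = ∑_{(p,q) ∈ S} xᵖ yᑫ`, the variable `t`
becomes `τ = x y / P(x,y) ∈ ℚ(x,y)`. Writing `P = c̃(y) + b̃(y) X + ã(y) X²`, the map `φ` replaces
`x` by `c̃/(ã x)`, the other root of `P(X, y) = λ X` with `λ = P(x,y)/x`; so `φ` fixes `λ`, hence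
`τ = y/λ`, and symmetrically so does `ψ`. Since `ℚ(x,y)` is algebraic over `ℚ(x,τ)` and over
`ℚ(y,τ)`, both pairs are algebraically independent, and specialising `t ↦ τ` in
`K ∣ num(I(x) - J(y))` gives `I(x,τ) = J(y,τ)`. This element is fixed by `ψ` (a function of `x`
and `τ`) and by `φ` (a function of `y` and `τ`). As `I ∉ ℚ(t)`, `x` is algebraic over
`ℚ(τ, I(x,τ))`, hence so is `y`: the field `ℚ(x,y)` is a finite extension of a subfield fixed
pointwise by the group, which is therefore finite.
-/

open MvPolynomial

theorem Finset.sum_pow_mul_eq_quadratic {ι R : Type*} [CommSemiring R] (S : Finset ι)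
    (e : ι → Fin 3) (g : ι → R) (u : R) :
    ∑ s ∈ S, u ^ (e s : ℕ) * g s = (∑ s ∈ S with e s = 0, g s)
      + (∑ s ∈ S with e s = 1, g s) * u + (∑ s ∈ S with e s = 2, g s) * u ^ 2 := by
  rw [← Finset.sum_fiberwise S e, Fin.sum_univ_three]
  simp only [Finset.sum_mul]
  congr 1
  congr 1
  all_goals
    refine Finset.sum_congr rfl fun s hs => ?_
    rw [(Finset.mem_filter.mp hs).2]
    simp [mul_comm]

theorem div_quadratic_div_eq {K : Type*} [Field K] {a b c u : K} (ha : a ≠ 0) (hc : c ≠ 0)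
    (hu : u ≠ 0) :
    c / (a * u) / (c + b * (c / (a * u)) + a * (c / (a * u)) ^ 2)
      = u / (c + b * u + a * u ^ 2) := by
  have h : c + b * (c / (a * u)) + a * (c / (a * u)) ^ 2
      = c * (c + b * u + a * u ^ 2) / (a * u ^ 2) := by
    field_simp
    ring
  rw [h]
  rcases eq_or_ne (c + b * u + a * u ^ 2) 0 with hQ | hQ
  · simp [hQ]
  · field_simp

section Automorphisms

variable {L : Type*} [Field L]

theorem RingEquiv.ne_zero_of_apply_eq_div (σ : L ≃+* L) {u c a : L} (hu : u ≠ 0)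
    (h : σ u = c / (a * u)) : c ≠ 0 ∧ a ≠ 0 := by
  have := (map_ne_zero σ).mpr hu
  rw [h] at this
  simp_all

theorem RingEquiv.apply_mul_div_sum_eq_self {ι : Type*} (σ : L ≃+* L) (S : Finset ι)
    (e f : ι → Fin 3) {u w : L} (hu : u ≠ 0) (hw : σ w = w)
    (hσu : σ u = (∑ s ∈ S with e s = 0, w ^ (f s : ℕ)) /
      ((∑ s ∈ S with e s = 2, w ^ (f s : ℕ)) * u)) :
    σ (u * w / ∑ s ∈ S, u ^ (e s : ℕ) * w ^ (f s : ℕ))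
      = u * w / ∑ s ∈ S, u ^ (e s : ℕ) * w ^ (f s : ℕ) := by
  obtain ⟨hc, ha⟩ := σ.ne_zero_of_apply_eq_div hu hσu
  have hσP : σ (∑ s ∈ S, u ^ (e s : ℕ) * w ^ (f s : ℕ))
      = ∑ s ∈ S, σ u ^ (e s : ℕ) * w ^ (f s : ℕ) := by
    simp [map_sum, hw]
  rw [map_div₀, map_mul, hσP, hw, mul_div_right_comm, mul_div_right_comm u,
    Finset.sum_pow_mul_eq_quadratic, Finset.sum_pow_mul_eq_quadratic, hσu,
    div_quadratic_div_eq ha hc hu]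

theorem RingEquiv.apply_mul_div_sum_eq_self' {ι : Type*} (σ : L ≃+* L) (S : Finset ι)
    (e f : ι → Fin 3) {u w : L} (hw : w ≠ 0) (hu : σ u = u)
    (hσw : σ w = (∑ s ∈ S with f s = 0, u ^ (e s : ℕ)) /
      ((∑ s ∈ S with f s = 2, u ^ (e s : ℕ)) * w)) :
    σ (u * w / ∑ s ∈ S, u ^ (e s : ℕ) * w ^ (f s : ℕ))
      = u * w / ∑ s ∈ S, u ^ (e s : ℕ) * w ^ (f s : ℕ) := by
  have := σ.apply_mul_div_sum_eq_self S f e hw hu hσw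
  rwa [mul_comm w u, Finset.sum_congr rfl fun s _ => mul_comm (w ^ (f s : ℕ)) (u ^ (e s : ℕ))]
    at this

theorem RingEquiv.apply_div_aeval_eq_self [CharZero L] {ι : Type*} (σ : L ≃+* L) {v : ι → L}
    (hv : ∀ i, σ (v i) = v i) (p q : MvPolynomial ι ℚ) :
    σ (aeval v p / aeval v q) = aeval v p / aeval v q := by
  have hσ (p : MvPolynomial ι ℚ) : σ (aeval v p) = aeval v p := by
    simpa [hv] using comp_aeval_apply v (σ.toRatAlgEquiv : L →ₐ[ℚ] L) p
  rw [map_div₀, hσ, hσ]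

theorem Subgroup.finite_closure_of_forall_apply_eq_self {s : Set (L ≃+* L)} {T : Set L}
    [FiniteDimensional (Subfield.closure T) L] (h : ∀ g ∈ s, ∀ z ∈ T, g z = z) :
    (Subgroup.closure s : Set (L ≃+* L)).Finite := by
  have hfix : ∀ g ∈ Subgroup.closure s, ∀ a ∈ Subfield.closure T, g a = a := by
    intro g hg
    have hgT : g ∈ fixingSubgroup (L ≃+* L) T :=
      (Subgroup.closure_le _).mpr (fun g hg => (mem_fixingSubgroup_iff _).mpr (h g hg)) hg
    exact (Subfield.closure_le (t := RingHom.eqLocusField (g : L →+* L) (RingHom.id L))).mpr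
      ((mem_fixingSubgroup_iff _).mp hgT)
  let toAlgHom (g : Subgroup.closure s) : L →ₐ[Subfield.closure T] L :=
    { (g : L ≃+* L).toRingHom with commutes' := fun a => hfix g g.2 a a.2 }
  have : Function.Injective toAlgHom := fun g g' h =>
    Subtype.ext (RingEquiv.ext (AlgHom.congr_fun h))
  exact Set.finite_coe_iff.mp (Finite.of_injective toAlgHom this)

end Automorphisms

section KernelCurve

variable {ι K L : Type*} [Field K] [Field L] [Algebra K L]

theorem isAlgebraic_of_mul_sum_eq_mul (S : Finset ι) (e f : ι → Fin 3) {u w τ : L}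
    (hu : u ∈ (algebraMap K L).range) (hτ : τ ∈ (algebraMap K L).range)
    (hc : τ * ∑ s ∈ S with f s = 0, u ^ (e s : ℕ) ≠ 0)
    (h : τ * ∑ s ∈ S, u ^ (e s : ℕ) * w ^ (f s : ℕ) = u * w) : IsAlgebraic K w := by
  obtain ⟨u, rfl⟩ := hu
  obtain ⟨t, rfl⟩ := hτ
  refine ⟨Polynomial.C t * ∑ s ∈ S, Polynomial.monomial (f s : ℕ) (u ^ (e s : ℕ))
    - Polynomial.C u * Polynomial.X, fun h0 => hc ?_, ?_⟩
  · have hcoeff : t * ∑ s ∈ S with f s = 0, u ^ (e s : ℕ) = 0 := by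
      simpa [Polynomial.finsetSum_coeff, Polynomial.coeff_monomial, Finset.sum_filter, eq_comm]
        using congrArg (Polynomial.coeff · 0) h0
    simpa using congrArg (algebraMap K L) hcoeff
  · simpa [map_sum, sub_eq_zero] using h

theorem isIntegral_of_mul_sum_eq_mul (S : Finset ι) (e f : ι → Fin 3) {u w τ : L}
    (hu : IsIntegral K u) (hτ : τ ∈ (algebraMap K L).range)
    (hc : τ * ∑ s ∈ S with f s = 0, u ^ (e s : ℕ) ≠ 0)
    (h : τ * ∑ s ∈ S, u ^ (e s : ℕ) * w ^ (f s : ℕ) = u * w) : IsIntegral K w := by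
  let M := IntermediateField.adjoin K {u}
  have : FiniteDimensional K M := IntermediateField.adjoin.finiteDimensional hu
  obtain ⟨t, rfl⟩ := hτ
  have hw : IsAlgebraic M w := isAlgebraic_of_mul_sum_eq_mul S e f
    ⟨⟨u, IntermediateField.mem_adjoin_simple_self K u⟩, rfl⟩ ⟨algebraMap K M t, rfl⟩ hc h
  exact isIntegral_trans w hw.isIntegral

end KernelCurve

theorem div_aeval_eq_of_kernel_dvd {L : Type*} [Field L] [CharZero L]
    (S : Finset (Fin 3 × Fin 3)) {u w τ : L} (huτ : AlgebraicIndependent ℚ ![u, τ])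
    (hwτ : AlgebraicIndependent ℚ ![w, τ])
    (h : τ * ∑ s ∈ S, u ^ (s.1 : ℕ) * w ^ (s.2 : ℕ) = u * w) {nI dI nJ dJ : MvPolynomial (Fin 2) ℚ}
    (hdI : dI ≠ 0) (hdJ : dJ ≠ 0)
    (hdvd : (X 2 * ∑ s ∈ S, X 0 ^ (s.1 : ℕ) * X 1 ^ (s.2 : ℕ) - X 0 * X 1 :
      MvPolynomial (Fin 3) ℚ) ∣
      rename ![0, 2] nI * rename ![1, 2] dJ - rename ![1, 2] nJ * rename ![0, 2] dI) :
    aeval ![u, τ] nI / aeval ![u, τ] dI = aeval ![w, τ] nJ / aeval ![w, τ] dJ := by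
  obtain ⟨c, hc⟩ := hdvd
  have h02 : ![u, w, τ] ∘ ![0, 2] = ![u, τ] := by ext i; fin_cases i <;> rfl
  have h12 : ![u, w, τ] ∘ ![1, 2] = ![w, τ] := by ext i; fin_cases i <;> rfl
  have := congrArg (aeval ![u, w, τ]) hc
  simp only [map_sub, map_mul, aeval_rename, h02, h12, map_sum, map_pow, aeval_X] at this
  rw [div_eq_div_iff (fun h0 => hdI (huτ (h0.trans (map_zero _).symm)))
    (fun h0 => hdJ (hwτ (h0.trans (map_zero _).symm)))]
  simpa [h, sub_eq_zero] using this

theorem MvPolynomial.exists_aeval_C_X_ne_zero {k : Type*} [Field k] [Infinite k]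
    {d : MvPolynomial (Fin 2) k} (hd : d ≠ 0) :
    ∃ r : k, aeval ![Polynomial.C r, Polynomial.X] d ≠ 0 := by
  by_contra! h
  refine hd (MvPolynomial.funext fun v => ?_)
  have := congrArg (Polynomial.aeval (v 1)) (h (v 0))
  have hv : (fun i => Polynomial.aeval (v 1) (![Polynomial.C (v 0), Polynomial.X] i)) = v := by
    ext i; fin_cases i <;> simp
  rw [comp_aeval_apply, hv, map_zero] at this
  rwa [map_zero, ← coe_aeval_eq_eval]

/-- `a` is a root of `n(X, b) - I · d(X, b) ∈ E[X]`, where `I = n(a,b)/d(a,b)`. Were this polynomial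
zero, specialising `X ↦ r` with `d(r, t) ≠ 0` would give `n/d = n(r,t)/d(r,t) ∈ ℚ(t)`. -/
theorem isAlgebraic_of_div_aeval_mem {L : Type*} [Field L] [CharZero L] {a b : L}
    (hab : AlgebraicIndependent ℚ ![a, b]) {n d : MvPolynomial (Fin 2) ℚ} (hd : d ≠ 0)
    (hnd : ¬ ∃ n₂ d₂ : Polynomial ℚ, d₂ ≠ 0 ∧
      n * Polynomial.aeval (X 1) d₂ = Polynomial.aeval (X 1) n₂ * d)
    (E : Subfield L) (hb : b ∈ E) (hI : aeval ![a, b] n / aeval ![a, b] d ∈ E) :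
    IsAlgebraic E a := by
  have hda : aeval ![a, b] d ≠ 0 := fun h => hd (hab (by rw [h, map_zero]))
  let ev : MvPolynomial (Fin 2) ℚ →ₐ[ℚ] Polynomial E :=
    aeval ![Polynomial.X, Polynomial.C ⟨b, hb⟩]
  have hev (z : L) (p : MvPolynomial (Fin 2) ℚ) : Polynomial.aeval z (ev p) = aeval ![z, b] p := by
    rw [← AlgHom.restrictScalars_apply ℚ, comp_aeval_apply]
    congr; ext i; fin_cases i <;> simp [Subfield.algebraMap_ofSubfield]
  have hspec (r : ℚ) (p : MvPolynomial (Fin 2) ℚ) :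
      aeval ![a, b] (Polynomial.aeval (X 1 : MvPolynomial (Fin 2) ℚ)
        (aeval ![Polynomial.C r, Polynomial.X] p)) = aeval ![(r : L), b] p := by
    rw [comp_aeval_apply, comp_aeval_apply]
    congr; ext i; fin_cases i <;> simp
  set I := aeval ![a, b] n / aeval ![a, b] d
  have hIcoe : algebraMap E L ⟨I, hI⟩ = I := rfl
  have hnI : aeval ![a, b] n = I * aeval ![a, b] d := (div_mul_cancel₀ _ hda).symm
  refine ⟨ev n - Polynomial.C ⟨I, hI⟩ * ev d, fun hQ => hnd ?_, ?_⟩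
  · obtain ⟨r, hr⟩ := exists_aeval_C_X_ne_zero hd
    refine ⟨aeval ![Polynomial.C r, Polynomial.X] n, _, hr, hab ?_⟩
    have hr' := congrArg (Polynomial.aeval (r : L)) hQ
    rw [map_sub, map_mul, hev, hev, Polynomial.aeval_C, hIcoe, map_zero, sub_eq_zero] at hr'
    simp only [map_mul, hspec, hr', hnI]
    ring
  · rw [map_sub, map_mul, hev, hev, Polynomial.aeval_C, hIcoe, hnI, sub_self]

namespace FractionRing

variable {ι : Type*}

theorem subfield_eq_top_of_algebraMap_X_mem (F : Subfield (FractionRing (MvPolynomial ι ℚ)))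
    (hF : ∀ i, algebraMap (MvPolynomial ι ℚ) _ (X i) ∈ F) : F = ⊤ := by
  have hmem (p : MvPolynomial ι ℚ) : algebraMap (MvPolynomial ι ℚ) _ p ∈ F := by
    induction p using MvPolynomial.induction_on with
    | C r =>
      rw [← MvPolynomial.algebraMap_eq, ← IsScalarTower.algebraMap_apply, eq_ratCast]
      exact SubfieldClass.ratCast_mem F r
    | add p q hp hq => rw [map_add]; exact add_mem hp hq
    | mul_X p i hp => rw [map_mul]; exact mul_mem hp (hF i)
  refine eq_top_iff.mpr fun z _ => ?_
  obtain ⟨p, q, -, rfl⟩ := IsFractionRing.div_surjective (MvPolynomial ι ℚ) z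
  exact div_mem (hmem p) (hmem q)

theorem finiteDimensional_of_isIntegral_X [Finite ι] {K : Type*} [Field K]
    [Algebra K (FractionRing (MvPolynomial ι ℚ))]
    (h : ∀ i, IsIntegral K
      (algebraMap (MvPolynomial ι ℚ) (FractionRing (MvPolynomial ι ℚ)) (X i))) :
    FiniteDimensional K (FractionRing (MvPolynomial ι ℚ)) := by
  let F := IntermediateField.adjoin K
    (Set.range fun i => algebraMap (MvPolynomial ι ℚ) (FractionRing (MvPolynomial ι ℚ)) (X i))
  have hF : F = ⊤ := IntermediateField.toSubfield_inj.mp <|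
    subfield_eq_top_of_algebraMap_X_mem _ fun i => IntermediateField.subset_adjoin _ _ ⟨i, rfl⟩
  have : FiniteDimensional K F :=
    IntermediateField.finiteDimensional_adjoin (by rintro _ ⟨i, rfl⟩; exact h i)
  rw [hF] at this
  exact IntermediateField.topEquiv.toLinearEquiv.finiteDimensional

theorem algebraicIndependent_of_isIntegral_X [Finite ι] (v : ι → FractionRing (MvPolynomial ι ℚ))
    (h : ∀ i, IsIntegral (IntermediateField.adjoin ℚ (Set.range v))
      (algebraMap (MvPolynomial ι ℚ) (FractionRing (MvPolynomial ι ℚ)) (X i))) :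
    AlgebraicIndependent ℚ v := by
  have := finiteDimensional_of_isIntegral_X h
  have : Algebra.IsAlgebraic (Algebra.adjoin ℚ (Set.range v))
      (FractionRing (MvPolynomial ι ℚ)) :=
    IntermediateField.isAlgebraic_adjoin_iff_top.mp inferInstance
  exact (Algebra.IsAlgebraic.isTranscendenceBasis_of_le_trdeg_of_finite ℚ v
    ((algebraicIndependent_X ι ℚ).map' (f := IsScalarTower.toAlgHom ℚ _ _)
      (IsFractionRing.injective _ _)).cardinalMk_le_trdeg).1

theorem sum_pow_mul_pow_ne_zero {S : Finset (Fin 3 × Fin 3)} (hS : S.Nonempty) :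
    ∑ s ∈ S, algebraMap (MvPolynomial (Fin 2) ℚ) (FractionRing (MvPolynomial (Fin 2) ℚ)) (X 0) ^
      (s.1 : ℕ) * algebraMap (MvPolynomial (Fin 2) ℚ) _ (X 1) ^ (s.2 : ℕ) ≠ 0 := by
  have hS' : (∑ s ∈ S, X 0 ^ (s.1 : ℕ) * X 1 ^ (s.2 : ℕ) : MvPolynomial (Fin 2) ℚ) ≠ 0 :=
    fun h => by simpa [hS.ne_empty] using congrArg (eval 1) h
  simpa [map_sum] using
    (map_ne_zero_iff _ (IsFractionRing.injective _ (FractionRing (MvPolynomial (Fin 2) ℚ)))).mpr hS'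

theorem algebraicIndependent_of_mul_sum_eq_mul {ι : Type*} (S : Finset ι) (e f : ι → Fin 3)
    {u w τ : FractionRing (MvPolynomial (Fin 2) ℚ)}
    (huw : ∀ i, algebraMap (MvPolynomial (Fin 2) ℚ) _ (X i) ∈ ({u, w} : Set _))
    (hc : τ * ∑ s ∈ S with f s = 0, u ^ (e s : ℕ) ≠ 0)
    (h : τ * ∑ s ∈ S, u ^ (e s : ℕ) * w ^ (f s : ℕ) = u * w) :
    AlgebraicIndependent ℚ ![u, τ] := by
  refine algebraicIndependent_of_isIntegral_X _ fun i => ?_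
  let K := IntermediateField.adjoin ℚ (Set.range ![u, τ])
  have hu : IsIntegral K u :=
    isIntegral_algebraMap (x := (⟨u, IntermediateField.subset_adjoin _ _ ⟨0, rfl⟩⟩ : K))
  rcases huw i with hi | hi <;> rw [hi]
  · exact hu
  · exact isIntegral_of_mul_sum_eq_mul S e f hu
      ⟨(⟨τ, IntermediateField.subset_adjoin _ _ ⟨1, rfl⟩⟩ : K), rfl⟩ hc h

end FractionRing

/-- **Infinite group ⟹ no rational invariants.**
The group of a quadrant model `S` is generated by the two birational (here: field
automorphism) transformations `φ : x ↦ c̃(y)/(ã(y)·x)` and `ψ : y ↦ c(x)/(a(x)·y)` of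
`ℚ(x,y)`, where (in shifted coordinates, `(p,q) ∈ S ⊆ {0,1,2}²` encoding the step
`(p-1,q-1)`) `c̃(y) = Σ_{(0,q)∈S} yᑫ`, `ã(y) = Σ_{(2,q)∈S} yᑫ`, and similarly for
`c, a`.  If this group is infinite, then the model admits no rational invariants:
there exist no `I(x) ∈ ℚ(x,t) \ ℚ(t)` and `J(y) ∈ ℚ(y,t)` such that the kernel
`K(x,y) = t·Σ_{(p,q)∈S} xᵖyᑫ - xy` divides the numerator of `I(x) - J(y)`.
(In the conclusion, `I = nI/dI`, `J = nJ/dJ`, and `![0,2]`, `![1,2]` embed the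
variable pairs `(x,t)` and `(y,t)` into the three variables `(x,y,t)`.) -/
theorem infinite_group_no_rational_invariants (S : Finset (Fin 3 × Fin 3))
    (φ ψ : FractionRing (MvPolynomial (Fin 2) ℚ) ≃+* FractionRing (MvPolynomial (Fin 2) ℚ))
    (hφx : φ (algebraMap (MvPolynomial (Fin 2) ℚ) _ (X 0)) =
      algebraMap (MvPolynomial (Fin 2) ℚ) _
          (∑ s ∈ S.filter (fun s => s.1 = 0), (X 1) ^ (s.2 : ℕ)) /
        (algebraMap (MvPolynomial (Fin 2) ℚ) _
            (∑ s ∈ S.filter (fun s => s.1 = 2), (X 1) ^ (s.2 : ℕ)) *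
          algebraMap (MvPolynomial (Fin 2) ℚ) _ (X 0)))
    (hφy : φ (algebraMap (MvPolynomial (Fin 2) ℚ) _ (X 1)) =
      algebraMap (MvPolynomial (Fin 2) ℚ) _ (X 1))
    (hψy : ψ (algebraMap (MvPolynomial (Fin 2) ℚ) _ (X 1)) =
      algebraMap (MvPolynomial (Fin 2) ℚ) _
          (∑ s ∈ S.filter (fun s => s.2 = 0), (X 0) ^ (s.1 : ℕ)) /
        (algebraMap (MvPolynomial (Fin 2) ℚ) _
            (∑ s ∈ S.filter (fun s => s.2 = 2), (X 0) ^ (s.1 : ℕ)) *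
          algebraMap (MvPolynomial (Fin 2) ℚ) _ (X 1)))
    (hψx : ψ (algebraMap (MvPolynomial (Fin 2) ℚ) _ (X 0)) =
      algebraMap (MvPolynomial (Fin 2) ℚ) _ (X 0))
    (hinf : Set.Infinite
      (SetLike.coe (Subgroup.closure ({φ, ψ} :
          Set (FractionRing (MvPolynomial (Fin 2) ℚ) ≃+*
            FractionRing (MvPolynomial (Fin 2) ℚ)))))) :
    ¬ ∃ nI dI nJ dJ : MvPolynomial (Fin 2) ℚ,
        dI ≠ 0 ∧ dJ ≠ 0 ∧
        (¬ ∃ n2 d2 : Polynomial ℚ, d2 ≠ 0 ∧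
            nI * Polynomial.aeval (X 1 : MvPolynomial (Fin 2) ℚ) d2
              = Polynomial.aeval (X 1 : MvPolynomial (Fin 2) ℚ) n2 * dI) ∧
        ((X 2 : MvPolynomial (Fin 3) ℚ) *
            (∑ s ∈ S, (X 0 : MvPolynomial (Fin 3) ℚ) ^ (s.1 : ℕ) * (X 1) ^ (s.2 : ℕ))
          - X 0 * X 1) ∣
          (rename ![0, 2] nI * rename ![1, 2] dJ - rename ![1, 2] nJ * rename ![0, 2] dI) := by
  rintro ⟨nI, dI, nJ, dJ, hdI, hdJ, hI, hdvd⟩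
  simp only [map_sum, map_pow] at hφx hψy
  set x := algebraMap (MvPolynomial (Fin 2) ℚ) (FractionRing (MvPolynomial (Fin 2) ℚ)) (X 0)
  set y := algebraMap (MvPolynomial (Fin 2) ℚ) (FractionRing (MvPolynomial (Fin 2) ℚ)) (X 1)
  have hx0 : x ≠ 0 := by simp [x]
  have hy0 : y ≠ 0 := by simp [y]
  obtain ⟨hc', -⟩ := φ.ne_zero_of_apply_eq_div hx0 hφx
  obtain ⟨hc, -⟩ := ψ.ne_zero_of_apply_eq_div hy0 hψy
  set P := ∑ s ∈ S, x ^ (s.1 : ℕ) * y ^ (s.2 : ℕ)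
  have hP : P ≠ 0 := FractionRing.sum_pow_mul_pow_ne_zero
    ((Finset.nonempty_of_sum_ne_zero hc).mono (Finset.filter_subset _ _))
  set τ := x * y / P
  have hτ : τ * P = x * y := div_mul_cancel₀ _ hP
  have hτ0 : τ ≠ 0 := div_ne_zero (mul_ne_zero hx0 hy0) hP
  have hφτ : φ τ = τ := φ.apply_mul_div_sum_eq_self S Prod.fst Prod.snd hx0 hφy hφx
  have hψτ : ψ τ = τ := ψ.apply_mul_div_sum_eq_self' S Prod.fst Prod.snd hy0 hψx hψy
  have hxτ : AlgebraicIndependent ℚ ![x, τ] :=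
    FractionRing.algebraicIndependent_of_mul_sum_eq_mul S Prod.fst Prod.snd
      (Fin.forall_fin_two.mpr ⟨Set.mem_insert _ _, Set.mem_insert_of_mem _ rfl⟩)
      (mul_ne_zero hτ0 hc) hτ
  have hyτ : AlgebraicIndependent ℚ ![y, τ] :=
    FractionRing.algebraicIndependent_of_mul_sum_eq_mul S Prod.snd Prod.fst
      (Fin.forall_fin_two.mpr ⟨Set.mem_insert_of_mem _ rfl, Set.mem_insert _ _⟩)
      (mul_ne_zero hτ0 hc') (by rw [Finset.sum_congr rfl fun _ _ => mul_comm _ _, mul_comm y, hτ])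
  have hIJ := div_aeval_eq_of_kernel_dvd S hxτ hyτ hτ hdI hdJ hdvd
  set I := aeval ![x, τ] nI / aeval ![x, τ] dI
  have hτK : τ ∈ Subfield.closure {τ, I} := Subfield.subset_closure (Set.mem_insert _ _)
  have hxK : IsIntegral (Subfield.closure {τ, I}) x := (isAlgebraic_of_div_aeval_mem hxτ hdI hI
    _ hτK (Subfield.subset_closure (Set.mem_insert_of_mem _ rfl))).isIntegral
  have hyK : IsIntegral (Subfield.closure {τ, I}) y := isIntegral_of_mul_sum_eq_mul S Prod.fst
    Prod.snd hxK ⟨⟨τ, hτK⟩, rfl⟩ (mul_ne_zero hτ0 hc) hτ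
  have := FractionRing.finiteDimensional_of_isIntegral_X (Fin.forall_fin_two.mpr ⟨hxK, hyK⟩)
  refine hinf (Subgroup.finite_closure_of_forall_apply_eq_self (T := {τ, I}) ?_)
  simp only [Set.mem_insert_iff, Set.mem_singleton_iff, forall_eq_or_imp, forall_eq]
  refine ⟨⟨hφτ, ?_⟩, hψτ, ?_⟩
  · rw [hIJ]
    exact φ.apply_div_aeval_eq_self (Fin.forall_fin_two.mpr ⟨hφy, hφτ⟩) _ _
  · exact ψ.apply_div_aeval_eq_self (Fin.forall_fin_two.mpr ⟨hψx, hψτ⟩) _ _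
end

section
/- For the first weighted model of Kauers–Yatchak (steps (-1,0),(-1,-1),(0,-1),(1,-1),(1,1) with weights 1,1,λ,1,1 and (1,0) with weight 2), and H(x,y) = x^{a+1}y^{b+1}: the alternating orbit sum of H over the group of order 6 vanishes if and only if (a,b) = (0,0). In particular, evaluating the alternating sum at y = x-1 and letting x → ∞ gives the leading behavior H_α(x, x-1) = x^{a+b+2} - x^{3b-a+2} + o(·), forcing a = b, and a further expansion forces a = b = 0. -/
/-!
Write `A = a + 1`, `B = b + 1`, `P = x²z + λx + 1`, `Q = x²z² + λxz + 1`, `R = x² + λx + 1`.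
Fix `x = n ∈ {2, 3}` with `R ≠ 0`. Multiplying the orbit sum by `x^(A+2B) z^A (z-1)^B P^A`
clears all denominators and leaves a polynomial `N(z)`; it vanishes on a punctured
neighbourhood of `z = 1`, hence at `z = 1` by continuity. There
`N(1) = R^(A+B) (x^(2B) - x^(2A))`, so `A = B`. For `A = B` the polynomial factors as
`N(z) = (z - 1) N̂(z)`, and again `N̂(1) = 0`, while `N̂(1) = A x^(2A) R^(2A-1) (x² - 1)` as
soon as `A ≥ 2`. For `A = B = 1`, `N` vanishes identically.
-/

open Filter Topology Finset

theorem ContinuousAt.eq_zero_of_eventually_nhdsNE {X Y : Type*} [TopologicalSpace X]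
    [TopologicalSpace Y] [T2Space Y] [Zero Y] {f : X → Y} {c : X} [(𝓝[≠] c).NeBot]
    (hf : ContinuousAt f c) (h : ∀ᶠ z in 𝓝[≠] c, f z = 0) : f c = 0 :=
  ((hf.eventuallyEq_nhds_iff_eventuallyEq_nhdsNE continuousAt_const).1 h).eq_of_nhds

-- The paper's `H_α(x, y)` at `y = z - 1`.
noncomputable def altOrbitSum (lam : ℂ) (H : ℂ → ℂ → ℂ) (x z : ℂ) : ℂ :=
  H x (z - 1) - H ((x * z)⁻¹) (z - 1)
    + H ((x * z)⁻¹) ((x ^ 2 * z ^ 2 + lam * x * z + 1) / (z - 1))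
    - H (x * (z - 1) / (x ^ 2 * z + lam * x + 1)) ((x ^ 2 * z ^ 2 + lam * x * z + 1) / (z - 1))
    + H (x * (z - 1) / (x ^ 2 * z + lam * x + 1)) ((lam * x + x ^ 2 + 1) / (x ^ 2 * (z - 1)))
    - H x ((lam * x + x ^ 2 + 1) / (x ^ 2 * (z - 1)))

def monomialOrbitNumerator (lam : ℂ) (A B : ℕ) (x z : ℂ) : ℂ :=
  x ^ (2 * A + 2 * B) * z ^ A * (z - 1) ^ (2 * B) * (x ^ 2 * z + lam * x + 1) ^ A
    - x ^ (2 * B) * (z - 1) ^ (2 * B) * (x ^ 2 * z + lam * x + 1) ^ A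
    + x ^ (2 * B) * (x ^ 2 * z ^ 2 + lam * x * z + 1) ^ B * (x ^ 2 * z + lam * x + 1) ^ A
    - x ^ (2 * A + 2 * B) * z ^ A * (z - 1) ^ A * (x ^ 2 * z ^ 2 + lam * x * z + 1) ^ B
    + x ^ (2 * A) * z ^ A * (z - 1) ^ A * (lam * x + x ^ 2 + 1) ^ B
    - x ^ (2 * A) * z ^ A * (lam * x + x ^ 2 + 1) ^ B * (x ^ 2 * z + lam * x + 1) ^ A

def diagOrbitQuotient (lam : ℂ) (m : ℕ) (x z : ℂ) : ℂ :=
  (z - 1) ^ (2 * m + 1) * (x ^ 2 * z + lam * x + 1) ^ (m + 1)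
      * (x ^ (4 * (m + 1)) * z ^ (m + 1) - x ^ (2 * (m + 1)))
    + x ^ (2 * (m + 1)) * (x ^ 2 * z + lam * x + 1) ^ (m + 1) * (x ^ 2 * z - 1)
      * ∑ i ∈ range (m + 1),
          (x ^ 2 * z ^ 2 + lam * x * z + 1) ^ i * (z * (lam * x + x ^ 2 + 1)) ^ (m - i)
    + x ^ (2 * (m + 1)) * z ^ (m + 1) * (z - 1) ^ m
      * ((lam * x + x ^ 2 + 1) ^ (m + 1)
        - x ^ (2 * (m + 1)) * (x ^ 2 * z ^ 2 + lam * x * z + 1) ^ (m + 1))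

theorem altOrbitSum_monomial_mul {lam x z : ℂ} (A B : ℕ) (hx : x ≠ 0) (hz : z ≠ 0)
    (hz1 : z - 1 ≠ 0) (hP : x ^ 2 * z + lam * x + 1 ≠ 0) :
    altOrbitSum lam (fun u v => u ^ A * v ^ B) x z
        * (x ^ (A + 2 * B) * z ^ A * (z - 1) ^ B * (x ^ 2 * z + lam * x + 1) ^ A)
      = monomialOrbitNumerator lam A B x z := by
  simp only [altOrbitSum, monomialOrbitNumerator]
  generalize z - 1 = w at *
  generalize x ^ 2 * z + lam * x + 1 = p at *
  simp only [div_pow, mul_pow, inv_pow]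
  field_simp
  ring

theorem monomialOrbitNumerator_one_one (lam x z : ℂ) :
    monomialOrbitNumerator lam 1 1 x z = 0 := by
  unfold monomialOrbitNumerator
  ring

theorem monomialOrbitNumerator_at_one (lam x : ℂ) {A B : ℕ} (hA : A ≠ 0) (hB : B ≠ 0) :
    monomialOrbitNumerator lam A B x 1
      = (lam * x + x ^ 2 + 1) ^ (A + B) * (x ^ (2 * B) - x ^ (2 * A)) := by
  simp [monomialOrbitNumerator, hA, hB]
  ring

-- `Q - z R = (z - 1) (x² z - 1)`, so `Q^A - (z R)^A` is divisible by `z - 1`.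
theorem monomialOrbitNumerator_diag (lam : ℂ) (m : ℕ) (x z : ℂ) :
    monomialOrbitNumerator lam (m + 1) (m + 1) x z = (z - 1) * diagOrbitQuotient lam m x z := by
  have hgeom :=
    geom_sum₂_mul (x ^ 2 * z ^ 2 + lam * x * z + 1) (z * (lam * x + x ^ 2 + 1)) (m + 1)
  simp only [Nat.add_sub_cancel] at hgeom
  unfold monomialOrbitNumerator diagOrbitQuotient
  simp only [mul_pow] at hgeom ⊢
  linear_combination (-x ^ (2 * (m + 1)) * (x ^ 2 * z + lam * x + 1) ^ (m + 1)) * hgeom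

theorem diagOrbitQuotient_at_one (lam x : ℂ) {m : ℕ} (hm : m ≠ 0) :
    diagOrbitQuotient lam m x 1
      = (m + 1) * x ^ (2 * (m + 1)) * (lam * x + x ^ 2 + 1) ^ (2 * m + 1) * (x ^ 2 - 1) := by
  have hQ : x ^ 2 * 1 ^ 2 + lam * x * 1 + 1 = lam * x + x ^ 2 + 1 := by ring
  have hsum := geom_sum₂_self (lam * x + x ^ 2 + 1) (m + 1)
  simp only [Nat.add_sub_cancel] at hsum
  simp only [diagOrbitQuotient, hQ, one_mul, hsum, sub_self, zero_pow hm,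
    zero_pow (Nat.succ_ne_zero _)]
  push_cast
  ring

theorem continuous_monomialOrbitNumerator (lam : ℂ) (A B : ℕ) (x : ℂ) :
    Continuous (monomialOrbitNumerator lam A B x) := by
  unfold monomialOrbitNumerator; fun_prop

theorem continuous_diagOrbitQuotient (lam : ℂ) (m : ℕ) (x : ℂ) :
    Continuous (diagOrbitQuotient lam m x) := by
  unfold diagOrbitQuotient; fun_prop

theorem eventually_nhdsNE_one_orbit_domain {lam x : ℂ} (hR : lam * x + x ^ 2 + 1 ≠ 0) :
    ∀ᶠ z in 𝓝[≠] (1 : ℂ), z ≠ 0 ∧ z - 1 ≠ 0 ∧ x ^ 2 * z + lam * x + 1 ≠ 0 := by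
  have hP : ∀ᶠ z in 𝓝 (1 : ℂ), x ^ 2 * z + lam * x + 1 ≠ 0 :=
    (by fun_prop : Continuous fun z : ℂ => x ^ 2 * z + lam * x + 1).continuousAt.eventually_ne
      (by rwa [mul_one, add_comm (x ^ 2)])
  filter_upwards [nhdsWithin_le_nhds (eventually_ne_nhds one_ne_zero), nhdsWithin_le_nhds hP,
    self_mem_nhdsWithin] with z hz hPz hz1
  exact ⟨hz, sub_ne_zero.2 hz1, hPz⟩

theorem monomialOrbitNumerator_eventually_eq_zero {lam x : ℂ} {A B : ℕ} (hx : x ≠ 0)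
    (hR : lam * x + x ^ 2 + 1 ≠ 0)
    (h : ∀ z : ℂ, z ≠ 0 → z - 1 ≠ 0 → x ^ 2 * z + lam * x + 1 ≠ 0 →
      altOrbitSum lam (fun u v => u ^ A * v ^ B) x z = 0) :
    ∀ᶠ z in 𝓝[≠] (1 : ℂ), monomialOrbitNumerator lam A B x z = 0 := by
  filter_upwards [eventually_nhdsNE_one_orbit_domain hR] with z ⟨hz, hz1, hP⟩
  rw [← altOrbitSum_monomial_mul A B hx hz hz1 hP, h z hz hz1 hP, zero_mul]

theorem exponents_eq_of_monomialOrbitNumerator_eventually_eq_zero {lam : ℂ} {n A B : ℕ}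
    (hn : 2 ≤ n) (hR : lam * n + (n : ℂ) ^ 2 + 1 ≠ 0) (hA : A ≠ 0) (hB : B ≠ 0)
    (h : ∀ᶠ z in 𝓝[≠] (1 : ℂ), monomialOrbitNumerator lam A B n z = 0) : A = B := by
  have h1 :=
    (continuous_monomialOrbitNumerator lam A B n).continuousAt.eq_zero_of_eventually_nhdsNE h
  rw [monomialOrbitNumerator_at_one lam n hA hB, mul_eq_zero, sub_eq_zero] at h1
  have hpow : n ^ (2 * B) = n ^ (2 * A) := by exact_mod_cast h1.resolve_left (pow_ne_zero _ hR)
  have := Nat.pow_right_injective hn hpow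
  omega

theorem not_eventually_diag_monomialOrbitNumerator_eq_zero {lam x : ℂ} {m : ℕ} (hm : m ≠ 0)
    (hx : x ≠ 0) (hx1 : x ^ 2 ≠ 1) (hR : lam * x + x ^ 2 + 1 ≠ 0) :
    ¬ ∀ᶠ z in 𝓝[≠] (1 : ℂ), monomialOrbitNumerator lam (m + 1) (m + 1) x z = 0 := by
  intro h
  have hquot : ∀ᶠ z in 𝓝[≠] (1 : ℂ), diagOrbitQuotient lam m x z = 0 := by
    filter_upwards [h, self_mem_nhdsWithin] with z hz hz1
    rw [monomialOrbitNumerator_diag] at hz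
    exact (mul_eq_zero.1 hz).resolve_left (sub_ne_zero.2 hz1)
  have h1 := (continuous_diagOrbitQuotient lam m x).continuousAt.eq_zero_of_eventually_nhdsNE hquot
  rw [diagOrbitQuotient_at_one lam x hm] at h1
  exact mul_ne_zero (mul_ne_zero (mul_ne_zero (Nat.cast_add_one_ne_zero m) (pow_ne_zero _ hx))
    (pow_ne_zero _ hR)) (sub_ne_zero.2 hx1) h1

theorem exists_two_le_quadratic_ne_zero (lam : ℂ) :
    ∃ n : ℕ, 2 ≤ n ∧ lam * n + (n : ℂ) ^ 2 + 1 ≠ 0 := by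
  by_contra! h
  have h2 := h 2 le_rfl
  have h3 := h 3 (by norm_num)
  push_cast at h2 h3
  have : (-5 : ℂ) = 0 := by linear_combination 3 * h2 - 2 * h3
  norm_num at this

/-- For the first weighted Kauers–Yatchak model (group of order 6, weight `λ`), the
alternating orbit sum of `H(x,y) = x^{a+1}·y^{b+1}` vanishes identically (after the
substitution `y = z - 1`, as a rational function of `x` and `z`, i.e. at every point
where the denominators do not vanish) if and only if `(a,b) = (0,0)`. -/
theorem weighted_model_alternating_sum_vanishes_iff (lam : ℂ) (a b : ℕ) :
    (let H : ℂ → ℂ → ℂ := fun u v => u ^ (a + 1) * v ^ (b + 1)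
     ∀ x z : ℂ, x ≠ 0 → z ≠ 0 → z - 1 ≠ 0 → x ^ 2 * z + lam * x + 1 ≠ 0 →
       H x (z - 1) - H ((x * z)⁻¹) (z - 1)
         + H ((x * z)⁻¹) ((x ^ 2 * z ^ 2 + lam * x * z + 1) / (z - 1))
         - H (x * (z - 1) / (x ^ 2 * z + lam * x + 1))
             ((x ^ 2 * z ^ 2 + lam * x * z + 1) / (z - 1))
         + H (x * (z - 1) / (x ^ 2 * z + lam * x + 1))
             ((lam * x + x ^ 2 + 1) / (x ^ 2 * (z - 1)))
         - H x ((lam * x + x ^ 2 + 1) / (x ^ 2 * (z - 1))) = 0)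
    ↔ (a = 0 ∧ b = 0) := by
  change (∀ x z : ℂ, x ≠ 0 → z ≠ 0 → z - 1 ≠ 0 → x ^ 2 * z + lam * x + 1 ≠ 0 →
    altOrbitSum lam (fun u v => u ^ (a + 1) * v ^ (b + 1)) x z = 0) ↔ _
  constructor
  · intro h
    obtain ⟨n, hn, hR⟩ := exists_two_le_quadratic_ne_zero lam
    have hx : (n : ℂ) ≠ 0 := Nat.cast_ne_zero.2 (by omega)
    have hN := monomialOrbitNumerator_eventually_eq_zero hx hR fun z => h n z hx
    obtain rfl : a = b := by
      simpa using exponents_eq_of_monomialOrbitNumerator_eventually_eq_zero hn hR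
        a.succ_ne_zero b.succ_ne_zero hN
    suffices a = 0 from ⟨this, this⟩
    by_contra ha
    have hx1 : (n : ℂ) ^ 2 ≠ 1 := by exact_mod_cast (Nat.one_lt_pow two_ne_zero hn).ne'
    exact not_eventually_diag_monomialOrbitNumerator_eq_zero ha hx hx1 hR hN
  · rintro ⟨rfl, rfl⟩ x z hx hz hz1 hP
    have hK : x ^ (1 + 2 * 1) * z ^ 1 * (z - 1) ^ 1 * (x ^ 2 * z + lam * x + 1) ^ 1 ≠ 0 := by
      simp [*]
    have := altOrbitSum_monomial_mul 1 1 hx hz hz1 hP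
    rw [monomialOrbitNumerator_one_one] at this
    exact (mul_eq_zero.1 this).resolve_right hK
end
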